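/- arXiv:2308.12650 — 3 statements merged into one kernel-verified Lean document; each statement's English description precedes it below -/
import Mathlib

section
/- For n = 2 and β = a₁ + a₂ ≥ 1, the upper envelope of f over X ∩ W₁₂, i.e. the convex hull of the hypograph {(x,z) ∈ (X ∩ W₁₂) × ℝ : z ≤ f(x)}, equals H = {(x,z) ∈ ℝ₊² × ℝ : x ∈ Y, z − z₀ ≤ (γ x₁^{a₁} x₂^{a₂})^{1/β}, and z ≤ u}. -/
/-!
Put `g = f ^ (1/β)`, the Cobb–Douglas function `x₁ ^ (a₁/β) * x₂ ^ (a₂/β)` with exponents summing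
to one. It is positively homogeneous and, by weighted AM–GM, superadditive, hence concave on the
orthant. In the variable `τ = g x` the hypograph is that of the convex function `τ ↦ τ ^ β` over
the band `ℓ ^ (1/β) ≤ τ ≤ u ^ (1/β)` of the wedge, so the envelope lies below the chord of `τ ^ β`
between the two levels (this is where `z₀` and `γ` come from), below `z = u`, and behind the line
through the two points where the level set `f = u` meets the boundary rays of the wedge: writing a
point of the wedge as a nonnegative combination of these two points, superadditivity of `g` puts
the whole level set behind that line.

Conversely, a point of `H` with `f x ≤ u` lies on a chord joining the two level sets along its ray,
and a point with `f x > u` lies in the triangle spanned by the two boundary points and the point of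
its ray on the level set `f = u`.
-/

open Real Set

noncomputable def cobbDouglas (s t : ℝ) (x : ℝ × ℝ) : ℝ := x.1 ^ s * x.2 ^ t

def wedge (p q : ℝ) : Set (ℝ × ℝ) := {x | 0 ≤ x ∧ p * x.1 ≤ x.2 ∧ x.2 ≤ q * x.1}

def hypograph {E : Type*} (f : E → ℝ) (D : Set E) : Set (E × ℝ) := {xz | xz.1 ∈ D ∧ xz.2 ≤ f xz.1}

section CobbDouglas

variable {s t : ℝ}

theorem cobbDouglas_rpow {x : ℝ × ℝ} (hx : 0 ≤ x) (r : ℝ) :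
    cobbDouglas s t x ^ r = cobbDouglas (s * r) (t * r) x := by
  simp only [cobbDouglas]
  rw [mul_rpow (rpow_nonneg hx.1 _) (rpow_nonneg hx.2 _), ← rpow_mul hx.1, ← rpow_mul hx.2]

theorem cobbDouglas_div_rpow {a₁ a₂ β : ℝ} (hβ : β ≠ 0) {x : ℝ × ℝ} (hx : 0 ≤ x) :
    cobbDouglas (a₁ / β) (a₂ / β) x ^ β = x.1 ^ a₁ * x.2 ^ a₂ := by
  rw [cobbDouglas_rpow hx, div_mul_cancel₀ _ hβ, div_mul_cancel₀ _ hβ]; rfl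

theorem cobbDouglas_nonneg {x : ℝ × ℝ} (hx : 0 ≤ x) : 0 ≤ cobbDouglas s t x :=
  mul_nonneg (rpow_nonneg hx.1 s) (rpow_nonneg hx.2 t)

theorem cobbDouglas_one_mk (σ : ℝ) : cobbDouglas s t (1, σ) = σ ^ t := by
  simp [cobbDouglas]

theorem cobbDouglas_smul (hst : s + t = 1) {c : ℝ} (hc : 0 ≤ c) {x : ℝ × ℝ} (hx : 0 ≤ x) :
    cobbDouglas s t (c • x) = c * cobbDouglas s t x := by
  have hc' : c ^ s * c ^ t = c := by rw [← rpow_add' hc (by simp [hst]), hst, rpow_one]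
  simp only [cobbDouglas, Prod.smul_fst, Prod.smul_snd, smul_eq_mul]
  rw [mul_rpow hc hx.1, mul_rpow hc hx.2]
  linear_combination (x.1 ^ s * x.2 ^ t) * hc'

theorem cobbDouglas_add_le (hs : 0 < s) (ht : 0 < t) (hst : s + t = 1) {x y : ℝ × ℝ}
    (hx : 0 ≤ x) (hy : 0 ≤ y) :
    cobbDouglas s t x + cobbDouglas s t y ≤ cobbDouglas s t (x + y) := by
  obtain ⟨hx₁, hx₂⟩ := hx
  obtain ⟨hy₁, hy₂⟩ := hy
  rcases (add_nonneg hx₁ hy₁).eq_or_lt with h₁ | h₁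
  · simp [cobbDouglas, (add_eq_zero_iff_of_nonneg hx₁ hy₁).1 h₁.symm, zero_rpow hs.ne']
  rcases (add_nonneg hx₂ hy₂).eq_or_lt with h₂ | h₂
  · simp [cobbDouglas, (add_eq_zero_iff_of_nonneg hx₂ hy₂).1 h₂.symm, zero_rpow ht.ne']
  -- weighted AM–GM applied to the coordinate ratios `v.1 / (x + y).1` and `v.2 / (x + y).2`
  have amgm : ∀ v : ℝ × ℝ, 0 ≤ v.1 → 0 ≤ v.2 → cobbDouglas s t v ≤
      cobbDouglas s t (x + y) * (s * (v.1 / (x.1 + y.1)) + t * (v.2 / (x.2 + y.2))) := by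
    intro v hv₁ hv₂
    calc cobbDouglas s t v = cobbDouglas s t (x + y) *
          ((v.1 / (x.1 + y.1)) ^ s * (v.2 / (x.2 + y.2)) ^ t) := by
          simp only [cobbDouglas, Prod.fst_add, Prod.snd_add]
          rw [div_rpow hv₁ h₁.le, div_rpow hv₂ h₂.le]
          field_simp
      _ ≤ _ := mul_le_mul_of_nonneg_left
          (geom_mean_le_arith_mean2_weighted hs.le ht.le (by positivity) (by positivity) hst)
          (by simp only [cobbDouglas, Prod.fst_add, Prod.snd_add]; positivity)
  calc cobbDouglas s t x + cobbDouglas s t y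
      ≤ cobbDouglas s t (x + y) * (s * (x.1 / (x.1 + y.1)) + t * (x.2 / (x.2 + y.2)))
        + cobbDouglas s t (x + y) * (s * (y.1 / (x.1 + y.1)) + t * (y.2 / (x.2 + y.2))) :=
        add_le_add (amgm x hx₁ hx₂) (amgm y hy₁ hy₂)
    _ = cobbDouglas s t (x + y) := by
        field_simp
        linear_combination (x.1 + y.1) * (x.2 + y.2) * cobbDouglas s t (x + y) * hst

theorem concaveOn_cobbDouglas (hs : 0 < s) (ht : 0 < t) (hst : s + t = 1) :
    ConcaveOn ℝ (Ici 0) (cobbDouglas s t) := by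
  refine ⟨convex_Ici 0, fun x hx y hy a b ha hb _ => ?_⟩
  rw [smul_eq_mul, smul_eq_mul, ← cobbDouglas_smul hst ha hx, ← cobbDouglas_smul hst hb hy]
  exact cobbDouglas_add_le hs ht hst (smul_nonneg ha hx) (smul_nonneg hb hy)

end CobbDouglas

section Wedge

variable {p q : ℝ}

theorem convex_wedge : Convex ℝ (wedge p q) := by
  rintro x ⟨hx, hpx, hxq⟩ y ⟨hy, hpy, hyq⟩ a b ha hb -
  refine ⟨add_nonneg (smul_nonneg ha hx) (smul_nonneg hb hy), ?_, ?_⟩ <;>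
    simp only [Prod.fst_add, Prod.snd_add, Prod.smul_fst, Prod.smul_snd, smul_eq_mul]
  · nlinarith [mul_le_mul_of_nonneg_left hpx ha, mul_le_mul_of_nonneg_left hpy hb]
  · nlinarith [mul_le_mul_of_nonneg_left hxq ha, mul_le_mul_of_nonneg_left hyq hb]

theorem smul_mem_wedge {c : ℝ} (hc : 0 ≤ c) {x : ℝ × ℝ} (hx : x ∈ wedge p q) :
    c • x ∈ wedge p q := by
  obtain ⟨hx, hpx, hxq⟩ := hx
  refine ⟨smul_nonneg hc hx, ?_, ?_⟩ <;> simp only [Prod.smul_fst, Prod.smul_snd, smul_eq_mul]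
  · nlinarith [mul_le_mul_of_nonneg_left hpx hc]
  · nlinarith [mul_le_mul_of_nonneg_left hxq hc]

theorem one_mk_mem_wedge {σ : ℝ} (hσ : 0 ≤ σ) (hpσ : p ≤ σ) (hσq : σ ≤ q) :
    ((1 : ℝ), σ) ∈ wedge p q :=
  ⟨⟨zero_le_one, hσ⟩, by simpa using hpσ, by simpa using hσq⟩

theorem exists_eq_smul_add_smul_of_mem_wedge (hpq : p < q) {x : ℝ × ℝ} (hx : x ∈ wedge p q) :
    ∃ α β : ℝ, 0 ≤ α ∧ 0 ≤ β ∧ x = α • ((1 : ℝ), p) + β • ((1 : ℝ), q) := by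
  obtain ⟨-, hpx, hxq⟩ := hx
  have hqp : 0 < q - p := sub_pos.2 hpq
  refine ⟨(q * x.1 - x.2) / (q - p), (x.2 - p * x.1) / (q - p),
    div_nonneg (by linarith) hqp.le, div_nonneg (by linarith) hqp.le, ?_⟩
  ext <;> simp only [Prod.fst_add, Prod.snd_add, Prod.smul_fst, Prod.smul_snd, smul_eq_mul] <;>
    field_simp <;> ring

end Wedge

theorem mem_segment_smul_self {E : Type*} [AddCommGroup E] [Module ℝ E] (x : E) {a b : ℝ}
    (ha : a ≤ 1) (hb : 1 ≤ b) : x ∈ segment ℝ (a • x) (b • x) := by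
  have h := image_segment ℝ (LinearMap.id.smulRight x : ℝ →ₗ[ℝ] E).toAffineMap a b
  simp only [LinearMap.coe_toAffineMap, LinearMap.smulRight_apply, LinearMap.id_coe, id_eq] at h
  rw [← h, segment_eq_Icc (ha.trans hb)]
  exact ⟨1, ⟨ha, hb⟩, one_smul ℝ x⟩

theorem smul_add_smul_mem_segment {p q t B α β : ℝ} (hp : 0 < p) (hq : 0 < q) (hB : 0 < B)
    (hα : 0 ≤ α) (hβ : 0 ≤ β) (hαβ : α * p ^ t + β * q ^ t = B) :
    α • ((1 : ℝ), p) + β • ((1 : ℝ), q) ∈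
      segment ℝ ((B / p ^ t) • ((1 : ℝ), p)) ((B / q ^ t) • ((1 : ℝ), q)) := by
  have hpt : 0 < p ^ t := rpow_pos_of_pos hp t
  have hqt : 0 < q ^ t := rpow_pos_of_pos hq t
  refine ⟨α * p ^ t / B, β * q ^ t / B, by positivity, by positivity, ?_, ?_⟩
  · rw [← add_div, hαβ, div_self hB.ne']
  · rw [smul_smul, smul_smul]
    congr 2 <;> field_simp

section Cap

/- `K` is the common value of `d₂ x₁ - d₁ x₂` at the points `σ ^ (-t) • (1, σ)` of the level set
`cobbDouglas s t = 1` on the two boundary rays `σ = p` and `σ = q` of the wedge. -/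

variable {s t p q d₁ d₂ K : ℝ}

theorem mul_fst_sub_mul_snd_smul_add_smul (hKp : d₂ - d₁ * p = K * p ^ t)
    (hKq : d₂ - d₁ * q = K * q ^ t) (α β : ℝ) :
    d₂ * (α • ((1 : ℝ), p) + β • ((1 : ℝ), q)).1 - d₁ * (α • ((1 : ℝ), p) + β • ((1 : ℝ), q)).2 =
      K * (α * p ^ t + β * q ^ t) := by
  simp only [Prod.fst_add, Prod.snd_add, Prod.smul_mk, smul_eq_mul, mul_one]
  linear_combination α * hKp + β * hKq

theorem mul_fst_sub_mul_snd_le_mul_cobbDouglas (hs : 0 < s) (ht : 0 < t) (hst : s + t = 1)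
    (hp : 0 ≤ p) (hpq : p < q) (hK : 0 ≤ K) (hKp : d₂ - d₁ * p = K * p ^ t)
    (hKq : d₂ - d₁ * q = K * q ^ t) {x : ℝ × ℝ} (hx : x ∈ wedge p q) :
    d₂ * x.1 - d₁ * x.2 ≤ K * cobbDouglas s t x := by
  obtain ⟨α, β, hα, hβ, rfl⟩ := exists_eq_smul_add_smul_of_mem_wedge hpq hx
  rw [mul_fst_sub_mul_snd_smul_add_smul hKp hKq]
  refine mul_le_mul_of_nonneg_left ?_ hK
  have hp' : (0 : ℝ × ℝ) ≤ (1, p) := ⟨zero_le_one, hp⟩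
  have hq' : (0 : ℝ × ℝ) ≤ (1, q) := ⟨zero_le_one, hp.trans hpq.le⟩
  calc α * p ^ t + β * q ^ t = cobbDouglas s t (α • (1, p)) + cobbDouglas s t (β • (1, q)) := by
        rw [cobbDouglas_smul hst hα hp', cobbDouglas_smul hst hβ hq', cobbDouglas_one_mk,
          cobbDouglas_one_mk]
    _ ≤ _ := cobbDouglas_add_le hs ht hst (smul_nonneg hα hp') (smul_nonneg hβ hq')

theorem mem_convexHull_levelSet_of_le (hs : 0 < s) (hst : s + t = 1) (hp : 0 < p)
    (hpq : p < q) (hK : 0 < K) (hKp : d₂ - d₁ * p = K * p ^ t)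
    (hKq : d₂ - d₁ * q = K * q ^ t) {B : ℝ} (hB : 0 < B) {x : ℝ × ℝ} (hx : x ∈ wedge p q)
    (hBx : B ≤ cobbDouglas s t x) (hLx : d₂ * x.1 - d₁ * x.2 ≤ B * K) :
    x ∈ convexHull ℝ {y | y ∈ wedge p q ∧ cobbDouglas s t y = B} := by
  set T := {y | y ∈ wedge p q ∧ cobbDouglas s t y = B}
  have hq : 0 < q := hp.trans hpq
  have hgx : 0 < cobbDouglas s t x := hB.trans_le hBx
  have hx₁ : 0 < x.1 := by
    refine hx.1.1.lt_of_ne fun h => ?_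
    simp [cobbDouglas, ← h, zero_rpow hs.ne'] at hgx
  have hboundary : ∀ σ, 0 < σ → p ≤ σ → σ ≤ q → (B / σ ^ t) • ((1 : ℝ), σ) ∈ T :=
    fun σ hσ hpσ hσq =>
    ⟨smul_mem_wedge (by positivity) (one_mk_mem_wedge hσ.le hpσ hσq), by
      rw [cobbDouglas_smul hst (by positivity) ⟨zero_le_one, hσ.le⟩, cobbDouglas_one_mk]
      field_simp⟩
  -- `x` lies between the point `(B / g x) • x` of the level set on its ray and the point
  -- `(B / m) • x` of the segment joining the level set's points on the two boundary rays
  have hy : (B / cobbDouglas s t x) • x ∈ T := ⟨smul_mem_wedge (by positivity) hx, by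
    rw [cobbDouglas_smul hst (by positivity) hx.1]; field_simp⟩
  obtain ⟨α, β, hα, hβ, rfl⟩ := exists_eq_smul_add_smul_of_mem_wedge hpq hx
  set m := α * p ^ t + β * q ^ t with hm_def
  have hm : 0 < m := by
    simp only [Prod.fst_add, Prod.smul_mk, smul_eq_mul, mul_one] at hx₁
    rcases hα.eq_or_lt with rfl | hα'
    · have : 0 < β := by simpa using hx₁
      positivity
    · positivity
  have hmB : m ≤ B := by
    rw [mul_fst_sub_mul_snd_smul_add_smul hKp hKq] at hLx
    exact le_of_mul_le_mul_left (by linarith) hK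
  have hw : (B / m) • (α • ((1 : ℝ), p) + β • ((1 : ℝ), q)) ∈ convexHull ℝ T := by
    rw [smul_add, smul_smul, smul_smul]
    refine segment_subset_convexHull (hboundary p hp le_rfl hpq.le)
      (hboundary q hq hpq.le le_rfl) (smul_add_smul_mem_segment hp hq hB
        (by positivity) (by positivity) ?_)
    field_simp
    exact hm_def.symm
  exact (convex_convexHull ℝ T).segment_subset (subset_convexHull ℝ T hy) hw
    (mem_segment_smul_self _ (div_le_one_of_le₀ hBx hgx.le) ((one_le_div hm).2 hmB))

end Cap

theorem ConvexOn.le_chord {φ : ℝ → ℝ} {A B τ : ℝ} (hφ : ConvexOn ℝ (Icc A B) φ) (hAB : A < B)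
    (hτ : τ ∈ Icc A B) : φ τ ≤ φ A + slope φ A B * (τ - A) := by
  have hBA : 0 < B - A := sub_pos.2 hAB
  have h := hφ.2 (left_mem_Icc.2 hAB.le) (right_mem_Icc.2 hAB.le)
    (div_nonneg (sub_nonneg.2 hτ.2) hBA.le) (div_nonneg (sub_nonneg.2 hτ.1) hBA.le)
    (by rw [← add_div, div_eq_one_iff_eq hBA.ne']; ring)
  have hcomb : ((B - τ) / (B - A)) • A + ((τ - A) / (B - A)) • B = τ := by
    simp only [smul_eq_mul]; field_simp; ring
  rw [hcomb, smul_eq_mul, smul_eq_mul] at h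
  calc φ τ ≤ _ := h
    _ = φ A + slope φ A B * (τ - A) := by rw [slope_def_field]; field_simp; ring

section Envelope

variable {s t p q d₁ d₂ K A B : ℝ} {φ : ℝ → ℝ}

theorem mk_mem_convexHull_hypograph_of_le_chord (hst : s + t = 1) (hA : 0 < A) (hAB : A < B)
    {x : ℝ × ℝ} (hx : x ∈ wedge p q) (hAx : A ≤ cobbDouglas s t x)
    (hxB : cobbDouglas s t x ≤ B) {z : ℝ}
    (hz : z ≤ φ A + slope φ A B * (cobbDouglas s t x - A)) :
    (x, z) ∈ convexHull ℝ (hypograph (φ ∘ cobbDouglas s t)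
      {x | x ∈ wedge p q ∧ A ≤ cobbDouglas s t x ∧ cobbDouglas s t x ≤ B}) := by
  set τ := cobbDouglas s t x with hτ_def
  have hτ : 0 < τ := hA.trans_le hAx
  have hBA : 0 < B - A := sub_pos.2 hAB
  set c := φ A + slope φ A B * (τ - A) - z with hc
  -- the chord over the ray through `x`, lowered by `c`, joins two points of the hypograph
  have hend : ∀ r, A ≤ r → r ≤ B → ((r / τ) • x, φ r - c) ∈ hypograph (φ ∘ cobbDouglas s t)
      {x | x ∈ wedge p q ∧ A ≤ cobbDouglas s t x ∧ cobbDouglas s t x ≤ B} := by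
    intro r hAr hrB
    have hr₀ : 0 ≤ r / τ := div_nonneg (hA.le.trans hAr) hτ.le
    have hr : cobbDouglas s t ((r / τ) • x) = r := by
      rw [cobbDouglas_smul hst hr₀ hx.1, ← hτ_def, div_mul_cancel₀ r hτ.ne']
    refine ⟨⟨smul_mem_wedge hr₀ hx, ?_, ?_⟩, ?_⟩ <;>
      simp only [Function.comp_apply, hr] <;> linarith
  refine segment_subset_convexHull (hend A le_rfl hAB.le) (hend B hAB.le le_rfl)
    ⟨(B - τ) / (B - A), (τ - A) / (B - A), div_nonneg (by linarith) hBA.le,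
      div_nonneg (by linarith) hBA.le, by field_simp; ring, ?_⟩
  simp only [Prod.smul_mk, Prod.mk_add_mk, smul_smul, ← add_smul, smul_eq_mul, Prod.mk.injEq]
  constructor
  · convert one_smul ℝ x using 2
    field_simp; ring
  · rw [hc, slope_def_field]; field_simp; ring

theorem convex_hypograph_min_chord (hs : 0 < s) (ht : 0 < t) (hst : s + t = 1)
    (hslope : 0 ≤ slope φ A B) (c : ℝ) :
    Convex ℝ (hypograph (fun x => min (φ A + slope φ A B * (cobbDouglas s t x - A)) (φ B))
      {x | x ∈ wedge p q ∧ A ≤ cobbDouglas s t x ∧ d₂ * x.1 - d₁ * x.2 ≤ c}) := by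
  have hg := concaveOn_cobbDouglas hs ht hst
  have hY : Convex ℝ {x | x ∈ wedge p q ∧ A ≤ cobbDouglas s t x ∧ d₂ * x.1 - d₁ * x.2 ≤ c} := by
    have hL : Convex ℝ {x : ℝ × ℝ | d₂ * x.1 - d₁ * x.2 ≤ c} :=
      convex_halfSpace_le (d₂ • LinearMap.fst ℝ ℝ ℝ - d₁ • LinearMap.snd ℝ ℝ ℝ).isLinear c
    convert ((hg.subset (fun x hx => hx.1) (convex_wedge (p := p) (q := q))).convex_ge A).inter hL
      using 1
    ext x
    exact and_assoc.symm
  have hchord : ConcaveOn ℝ {x | x ∈ wedge p q ∧ A ≤ cobbDouglas s t x ∧ d₂ * x.1 - d₁ * x.2 ≤ c}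
      fun x => φ A + slope φ A B * (cobbDouglas s t x - A) :=
    (((hg.subset (fun x hx => hx.1.1) hY).smul hslope).add_const (φ A - slope φ A B * A)).congr
      fun x _ => by simp only [Pi.add_apply, smul_eq_mul]; ring
  exact (hchord.inf (concaveOn_const _ hY)).convex_hypograph

theorem convexHull_hypograph_comp_cobbDouglas (hs : 0 < s) (ht : 0 < t) (hst : s + t = 1)
    (hp : 0 < p) (hpq : p < q) (hK : 0 < K) (hKp : d₂ - d₁ * p = K * p ^ t)
    (hKq : d₂ - d₁ * q = K * q ^ t) (hA : 0 < A) (hAB : A < B) (hφ : ConvexOn ℝ (Icc A B) φ)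
    (hφAB : φ A ≤ φ B) :
    convexHull ℝ (hypograph (φ ∘ cobbDouglas s t)
      {x | x ∈ wedge p q ∧ A ≤ cobbDouglas s t x ∧ cobbDouglas s t x ≤ B}) =
    hypograph (fun x => min (φ A + slope φ A B * (cobbDouglas s t x - A)) (φ B))
      {x | x ∈ wedge p q ∧ A ≤ cobbDouglas s t x ∧ d₂ * x.1 - d₁ * x.2 ≤ B * K} := by
  have hslope : 0 ≤ slope φ A B := by
    rw [slope_def_field]; exact div_nonneg (sub_nonneg.2 hφAB) (sub_nonneg.2 hAB.le)
  refine (convexHull_min ?_ (convex_hypograph_min_chord hs ht hst hslope _)).antisymm ?_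
  · rintro ⟨x, z⟩ ⟨⟨hx, hAx, hxB⟩, hz⟩
    have hchord := hφ.le_chord hAB ⟨hAx, hxB⟩
    refine ⟨⟨hx, hAx, ?_⟩, le_min (hz.trans hchord) (hz.trans (hchord.trans ?_))⟩
    · calc _ ≤ K * cobbDouglas s t x :=
            mul_fst_sub_mul_snd_le_mul_cobbDouglas hs ht hst hp.le hpq hK.le hKp hKq hx
        _ ≤ B * K := by rw [mul_comm]; exact mul_le_mul_of_nonneg_right hxB hK.le
    · calc φ A + slope φ A B * (cobbDouglas s t x - A) ≤ φ A + slope φ A B * (B - A) := by gcongr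
        _ = φ B := by rw [slope_def_field, div_mul_cancel₀ _ (sub_pos.2 hAB).ne']; ring
  · rintro ⟨x, z⟩ ⟨⟨hx, hAx, hLx⟩, hz⟩
    obtain ⟨hz_chord, hzB⟩ := le_min_iff.1 hz
    rcases le_or_gt (cobbDouglas s t x) B with hxB | hBx
    · exact mk_mem_convexHull_hypograph_of_le_chord hst hA hAB hx hAx hxB hz_chord
    -- beyond the upper level set, `(x, z)` lies over the hull of that level set at height `z`
    refine convexHull_mono (s := {y | y ∈ wedge p q ∧ cobbDouglas s t y = B} ×ˢ {z}) ?_ ?_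
    · rintro ⟨y, z'⟩ ⟨⟨hy, hgy⟩, rfl⟩
      exact ⟨⟨hy, hgy ▸ hAB.le, hgy.le⟩, by simpa [hgy] using hzB⟩
    · rw [convexHull_prod, convexHull_singleton]
      exact ⟨mem_convexHull_levelSet_of_le hs hst hp hpq hK hKp hKq (hA.trans hAB) hx hBx.le hLx,
        rfl⟩

end Envelope

theorem sub_mul_self_eq_div_rpow_mul_rpow {s t p q : ℝ} (hst : s + t = 1) (hp : 0 < p)
    (hq : 0 < q) :
    (q ^ s - p ^ s) - (q ^ (-t) - p ^ (-t)) * q =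
      ((q ^ s - p ^ s) - (q ^ (-t) - p ^ (-t)) * p) / p ^ t * q ^ t := by
  -- both sides equal `q ^ s * (q / p) ^ t - p ^ s`, once `σ = σ ^ s * σ ^ t` is substituted
  have hp' : p = p ^ s * p ^ t := by rw [← rpow_add hp, hst, rpow_one]
  have hq' : q = q ^ s * q ^ t := by rw [← rpow_add hq, hst, rpow_one]
  have hpt : p ^ t ≠ 0 := (rpow_pos_of_pos hp t).ne'
  have hqt : q ^ t ≠ 0 := (rpow_pos_of_pos hq t).ne'
  rw [rpow_neg hp.le, rpow_neg hq.le]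
  field_simp
  linear_combination (p ^ t * q ^ t - (p ^ t) ^ 2) * hq' + (p ^ t * q ^ t - (q ^ t) ^ 2) * hp'

theorem rpow_sub_rpow_sub_mul_pos {s t p q : ℝ} (hs : 0 < s) (ht : 0 < t) (hp : 0 < p)
    (hpq : p < q) : 0 < (q ^ s - p ^ s) - (q ^ (-t) - p ^ (-t)) * p := by
  have h₁ : q ^ (-t) - p ^ (-t) < 0 := sub_neg.2 (rpow_lt_rpow_of_neg hp hpq (neg_neg_of_pos ht))
  have h₂ : 0 < q ^ s - p ^ s := sub_pos.2 (rpow_lt_rpow hp.le hpq hs)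
  nlinarith

theorem div_div_rpow_rpow_inv {u P D β : ℝ} (hu : 0 ≤ u) (hP : 0 < P) (hD : 0 ≤ D)
    (hβ : β ≠ 0) (a : ℝ) :
    (u / (P ^ a / D ^ β)) ^ β⁻¹ = u ^ β⁻¹ * (D / P ^ (a / β)) := by
  rw [div_div_eq_mul_div, mul_div_assoc, mul_rpow hu (by positivity),
    div_rpow (by positivity) (by positivity), ← rpow_mul hP.le, ← div_eq_mul_inv,
    rpow_rpow_inv hD hβ]

theorem sub_le_rpow_iff_le_add_slope_mul {A B ℓ u β τ z : ℝ} (hβ : 0 < β) (hAB : A < B)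
    (hℓu : ℓ ≤ u) (hA : A ^ β = ℓ) (hB : B ^ β = u) (hτ : 0 ≤ τ) :
    z - (B * ℓ - A * u) / (B - A) ≤ (((u - ℓ) / (B - A)) ^ β * τ ^ β) ^ β⁻¹ ↔
      z ≤ ℓ + slope (· ^ β) A B * (τ - A) := by
  have hBA : 0 < B - A := sub_pos.2 hAB
  rw [← mul_rpow (div_nonneg (sub_nonneg.2 hℓu) hBA.le) hτ,
    rpow_rpow_inv (by positivity) hβ.ne', slope_def_field, hA, hB, sub_le_iff_le_add']
  rw [show (B * ℓ - A * u) / (B - A) + (u - ℓ) / (B - A) * τ = ℓ + (u - ℓ) / (B - A) * (τ - A) by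
    field_simp; ring]

/-- For `n = 2` and `β = a₁ + a₂ ≥ 1`, the upper envelope of `f` over
`X ∩ W₁₂` equals `H = {(x,z) : x ∈ Y, z − z₀ ≤ (γ x₁^{a₁} x₂^{a₂})^{1/β}, z ≤ u}`. -/
theorem upper_envelope_n2_of_one_le_beta (a₁ a₂ ℓ u p q β d₁ d₂ lam z₀ γ : ℝ)
    (ha₁ : 0 < a₁) (ha₂ : 0 < a₂) (hβ : β = a₁ + a₂) (hβ1 : 1 ≤ β)
    (hℓ : 0 < ℓ) (hℓu : ℓ < u) (hp : 0 < p) (hpq : p < q)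
    (hd₁ : d₁ = q ^ (-(a₂ / β)) - p ^ (-(a₂ / β)))
    (hd₂ : d₂ = q ^ (a₁ / β) - p ^ (a₁ / β))
    (hlam : lam = p ^ a₂ / (d₂ - d₁ * p) ^ β)
    (hz₀ : z₀ = (u ^ (1 / β) * ℓ - ℓ ^ (1 / β) * u) / (u ^ (1 / β) - ℓ ^ (1 / β)))
    (hγ : γ = ((u - ℓ) / (u ^ (1 / β) - ℓ ^ (1 / β))) ^ β) :
    convexHull ℝ
      {xz : (ℝ × ℝ) × ℝ |
        ((0 ≤ xz.1.1 ∧ 0 ≤ xz.1.2) ∧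
          (ℓ ≤ xz.1.1 ^ a₁ * xz.1.2 ^ a₂ ∧ xz.1.1 ^ a₁ * xz.1.2 ^ a₂ ≤ u) ∧
          (p * xz.1.1 ≤ xz.1.2 ∧ xz.1.2 ≤ q * xz.1.1)) ∧
        xz.2 ≤ xz.1.1 ^ a₁ * xz.1.2 ^ a₂} =
    {xz : (ℝ × ℝ) × ℝ |
        ((0 ≤ xz.1.1 ∧ 0 ≤ xz.1.2) ∧
          (p * xz.1.1 ≤ xz.1.2 ∧ xz.1.2 ≤ q * xz.1.1) ∧
          ℓ ≤ xz.1.1 ^ a₁ * xz.1.2 ^ a₂ ∧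
          d₂ * xz.1.1 - d₁ * xz.1.2 ≤ (u / lam) ^ (1 / β)) ∧
        xz.2 - z₀ ≤ (γ * (xz.1.1 ^ a₁ * xz.1.2 ^ a₂)) ^ (1 / β) ∧
        xz.2 ≤ u} := by
  have hβ0 : 0 < β := by linarith
  have hu : 0 < u := hℓ.trans hℓu
  have hst : a₁ / β + a₂ / β = 1 := by rw [← add_div, ← hβ, div_self hβ0.ne']
  have hpt : 0 < p ^ (a₂ / β) := rpow_pos_of_pos hp _
  have hD : 0 < d₂ - d₁ * p := by
    rw [hd₁, hd₂]; exact rpow_sub_rpow_sub_mul_pos (div_pos ha₁ hβ0) (div_pos ha₂ hβ0) hp hpq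
  simp only [one_div] at hz₀ hγ ⊢
  have hAB : ℓ ^ β⁻¹ < u ^ β⁻¹ := rpow_lt_rpow hℓ.le hℓu (by positivity)
  have hAβ : (ℓ ^ β⁻¹) ^ β = ℓ := rpow_inv_rpow hℓ.le hβ0.ne'
  have hBβ : (u ^ β⁻¹) ^ β = u := rpow_inv_rpow hu.le hβ0.ne'
  have key := convexHull_hypograph_comp_cobbDouglas (φ := (· ^ β))
    (K := (d₂ - d₁ * p) / p ^ (a₂ / β)) (div_pos ha₁ hβ0) (div_pos ha₂ hβ0) hst hp hpq
    (div_pos hD hpt) (div_mul_cancel₀ _ hpt.ne').symm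
    (by rw [hd₁, hd₂, sub_mul_self_eq_div_rpow_mul_rpow hst hp (hp.trans hpq)])
    (rpow_pos_of_pos hℓ _) hAB
    ((convexOn_rpow hβ1).subset (fun τ hτ => (rpow_nonneg hℓ.le _).trans hτ.1) (convex_Icc _ _))
    (rpow_le_rpow (by positivity) hAB.le hβ0.le)
  simp only [hAβ, hBβ] at key
  rw [hlam, div_div_rpow_rpow_inv hu.le hp hD.le hβ0.ne']
  convert key using 2 <;> ext ⟨x, z⟩ <;>
    simp only [hypograph, wedge, mem_ofPred_eq, Function.comp_apply, Prod.le_def, Prod.fst_zero,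
      Prod.snd_zero, le_min_iff]
  -- off the orthant both memberships fail; on it, `f = g ^ β`
  all_goals
    by_cases hx : 0 ≤ x.1 ∧ 0 ≤ x.2
    swap
    · exact iff_of_false (fun h => hx h.1.1) (fun h => hx h.1.1.1)
    rw [← cobbDouglas_div_rpow hβ0.ne' hx,
      ← rpow_inv_le_iff_of_pos hℓ.le (cobbDouglas_nonneg hx) hβ0]
  · rw [← le_rpow_inv_iff_of_pos (cobbDouglas_nonneg hx) hu.le hβ0]
    tauto
  · rw [hz₀, hγ, sub_le_rpow_iff_le_add_slope_mul hβ0 hAB hℓu.le hAβ hBβ (cobbDouglas_nonneg hx)]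
    tauto
end

section
/- For n = 2 and β = a₁ + a₂ ≥ 1, the lower envelope of f over X ∩ W₁₂, i.e. the convex hull of the epigraph {(x,z) ∈ (X ∩ W₁₂) × ℝ : z ≥ f(x)}, equals H = {(x,z) ∈ ℝ₊² × ℝ : x ∈ Y, z ≥ λ (d₂ x₁ − d₁ x₂)^β, and z ≥ ℓ}. -/
/-!
On the wedge `p x₁ ≤ x₂ ≤ q x₁`, `f ^ (1/β) = x₁ (x₂/x₁) ^ c` with `c = a₂/β` is the perspective
of the concave map `t ↦ t ^ c`, and with `μ = λ ^ (1/β)` the linear form `μ (d₂ x₁ - d₁ x₂)` is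
the perspective of its secant over `[p, q]`. Hence `λ (d₂ x₁ - d₁ x₂) ^ β ≤ f` on the wedge, with
equality on its two boundary rays. This puts the epigraph inside `H`, which is convex: superlevel
sets of `f` are convex by log-concavity, and `s ↦ λ s ^ β` is convex for `β ≥ 1`.

Conversely, a point `x` of `H` with `m = d₂ x₁ - d₁ x₂` lies on the segment joining the points
`v`, `w` of the two rays where the linear form also equals `m`; there `f = λ m ^ β ≤ min u z`.
Since `ℓ ≤ f x`, the intermediate value theorem on `[v, x]` and on `[x, w]` gives two points
around `x` with `ℓ ≤ f ≤ min u z`, and at height `z` both lie in the epigraph.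
-/

open Real Set

section Segment

variable {E : Type*} [AddCommGroup E] [Module ℝ E]

theorem mem_segment_of_mem_segment_left_of_mem_segment_right {v w x y₁ y₂ : E}
    (hx : x ∈ segment ℝ v w) (hy₁ : y₁ ∈ segment ℝ v x) (hy₂ : y₂ ∈ segment ℝ x w) :
    x ∈ segment ℝ y₁ y₂ := by
  rw [mem_segment_iff_wbtw] at *
  have h : Wbtw ℝ w x y₁ := (hx.trans_left_right hy₁).symm
  exact (h.trans_left_right hy₂.symm).symm

theorem smul_add_smul_mem_segment_s18 {A B α γ : ℝ} (hA : 0 < A) (hB : 0 < B) (hα : 0 ≤ α)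
    (hγ : 0 ≤ γ) (hm : 0 < α * A + γ * B) (e f : E) :
    α • e + γ • f ∈ segment ℝ (((α * A + γ * B) / A) • e) (((α * A + γ * B) / B) • f) := by
  refine ⟨α * A / (α * A + γ * B), γ * B / (α * A + γ * B), by positivity, by positivity,
    by field_simp, ?_⟩
  simp only [smul_smul]
  congr 2 <;> field_simp

variable [TopologicalSpace E] [IsTopologicalAddGroup E] [ContinuousSMul ℝ E]

theorem exists_mem_segment_mem_Icc {f : E → ℝ} {v x : E} {ℓ b : ℝ}
    (hf : ContinuousOn f (segment ℝ v x)) (hv : f v ≤ b) (hx : ℓ ≤ f x) (hℓb : ℓ ≤ b) :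
    ∃ y ∈ segment ℝ v x, f y ∈ Icc ℓ b := by
  by_cases hℓv : ℓ ≤ f v
  · exact ⟨v, left_mem_segment ℝ v x, hℓv, hv⟩
  obtain ⟨y, hy, hfy⟩ := (convex_segment v x).isPreconnected.intermediate_value
    (left_mem_segment ℝ v x) (right_mem_segment ℝ v x) hf ⟨(not_le.1 hℓv).le, hx⟩
  exact ⟨y, hy, hfy.ge, hfy ▸ hℓb⟩

theorem mem_convexHull_of_mem_segment {S : Set (E × ℝ)} {K : Set E} (hK : Convex ℝ K)
    {f : E → ℝ} {ℓ b z : ℝ} (hS : ∀ y ∈ K, f y ∈ Icc ℓ b → (y, z) ∈ S) {v w x : E}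
    (hv : v ∈ K) (hw : w ∈ K) (hx : x ∈ segment ℝ v w)
    (hf : ContinuousOn f (segment ℝ v w)) (hfv : f v ≤ b) (hfw : f w ≤ b) (hℓb : ℓ ≤ b)
    (hℓx : ℓ ≤ f x) : (x, z) ∈ convexHull ℝ S := by
  have hvx : segment ℝ v x ⊆ segment ℝ v w :=
    (convex_segment v w).segment_subset (left_mem_segment ℝ v w) hx
  have hwx : segment ℝ w x ⊆ segment ℝ v w :=
    (convex_segment v w).segment_subset (right_mem_segment ℝ v w) hx
  obtain ⟨y₁, hy₁, hfy₁⟩ := exists_mem_segment_mem_Icc (hf.mono hvx) hfv hℓx hℓb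
  obtain ⟨y₂, hy₂, hfy₂⟩ := exists_mem_segment_mem_Icc (hf.mono hwx) hfw hℓx hℓb
  have hK' := hK.segment_subset hv hw
  have hx' : x ∈ segment ℝ y₁ y₂ :=
    mem_segment_of_mem_segment_left_of_mem_segment_right hx hy₁ (segment_symm ℝ w x ▸ hy₂)
  refine segment_subset_convexHull (hS y₁ (hK' (hvx hy₁)) hfy₁) (hS y₂ (hK' (hwx hy₂)) hfy₂) ?_
  rw [← Prod.image_mk_segment_left]
  exact mem_image_of_mem _ hx'

end Segment

theorem le_div_rpow_one_div_iff {k m u β : ℝ} (hk : 0 < k) (hm : 0 ≤ m) (hu : 0 ≤ u)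
    (hβ : 0 < β) : m ≤ (u / k) ^ (1 / β) ↔ k * m ^ β ≤ u := by
  rw [one_div, le_rpow_inv_iff_of_pos hm (div_nonneg hu hk.le) hβ, le_div_iff₀' hk]

section Wedge

variable {a₁ a₂ ℓ p q : ℝ}

theorem pos_of_le_rpow_mul_rpow (ha₁ : 0 < a₁) (ha₂ : 0 < a₂) (hℓ : 0 < ℓ) {x : ℝ × ℝ}
    (hx : 0 ≤ x.1 ∧ 0 ≤ x.2) (hℓx : ℓ ≤ x.1 ^ a₁ * x.2 ^ a₂) : 0 < x.1 ∧ 0 < x.2 := by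
  refine ⟨hx.1.lt_of_ne ?_, hx.2.lt_of_ne ?_⟩ <;> rintro h <;>
    simp [← h, zero_rpow ha₁.ne', zero_rpow ha₂.ne'] at hℓx <;> linarith

-- `x ↦ a₁ log x₁ + a₂ log x₂` is concave on the open quadrant.
theorem convex_superlevel_rpow_mul_rpow (ha₁ : 0 < a₁) (ha₂ : 0 < a₂) (hℓ : 0 < ℓ) :
    Convex ℝ {x : ℝ × ℝ | (0 ≤ x.1 ∧ 0 ≤ x.2) ∧ ℓ ≤ x.1 ^ a₁ * x.2 ^ a₂} := by
  have hlog := strictConcaveOn_log_Ioi.concaveOn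
  have hquad : Convex ℝ (Ioi (0 : ℝ) ×ˢ Ioi (0 : ℝ)) := (convex_Ioi 0).prod (convex_Ioi 0)
  have hconc : ConcaveOn ℝ (Ioi 0 ×ˢ Ioi 0) fun x : ℝ × ℝ => a₁ * log x.1 + a₂ * log x.2 :=
    (((hlog.comp_linearMap (LinearMap.fst ℝ ℝ ℝ)).subset (fun _ hx => hx.1) hquad).smul
      ha₁.le).add (((hlog.comp_linearMap (LinearMap.snd ℝ ℝ ℝ)).subset (fun _ hx => hx.2)
      hquad).smul ha₂.le)
  have hpos : ∀ x : ℝ × ℝ, 0 < x.1 → 0 < x.2 → 0 < x.1 ^ a₁ * x.2 ^ a₂ := fun x h₁ h₂ =>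
    mul_pos (rpow_pos_of_pos h₁ _) (rpow_pos_of_pos h₂ _)
  have hlog_eq : ∀ x : ℝ × ℝ, 0 < x.1 → 0 < x.2 →
      log (x.1 ^ a₁ * x.2 ^ a₂) = a₁ * log x.1 + a₂ * log x.2 := fun x h₁ h₂ => by
    rw [log_mul (rpow_pos_of_pos h₁ _).ne' (rpow_pos_of_pos h₂ _).ne', log_rpow h₁, log_rpow h₂]
  convert hconc.convex_ge (log ℓ) using 1
  ext x
  constructor
  · rintro ⟨hx, hℓx⟩
    obtain ⟨h₁, h₂⟩ := pos_of_le_rpow_mul_rpow ha₁ ha₂ hℓ hx hℓx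
    exact ⟨⟨h₁, h₂⟩, hlog_eq x h₁ h₂ ▸ log_le_log hℓ hℓx⟩
  · rintro ⟨⟨h₁, h₂⟩, hℓx⟩
    exact ⟨⟨h₁.le, h₂.le⟩, (log_le_log_iff hℓ (hpos x h₁ h₂)).1 (hlog_eq x h₁ h₂ ▸ hℓx)⟩

theorem convex_wedge_s18 :
    Convex ℝ {x : ℝ × ℝ | (0 ≤ x.1 ∧ 0 ≤ x.2) ∧ (p * x.1 ≤ x.2 ∧ x.2 ≤ q * x.1)} := by
  rintro x ⟨⟨hx₁, hx₂⟩, hpx, hqx⟩ y ⟨⟨hy₁, hy₂⟩, hpy, hqy⟩ a b ha hb -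
  simp only [mem_ofPred_eq, Prod.fst_add, Prod.snd_add, Prod.smul_fst, Prod.smul_snd, smul_eq_mul]
  refine ⟨⟨add_nonneg (mul_nonneg ha hx₁) (mul_nonneg hb hy₁),
    add_nonneg (mul_nonneg ha hx₂) (mul_nonneg hb hy₂)⟩, ?_, ?_⟩
  · nlinarith [mul_le_mul_of_nonneg_left hpx ha, mul_le_mul_of_nonneg_left hpy hb]
  · nlinarith [mul_le_mul_of_nonneg_left hqx ha, mul_le_mul_of_nonneg_left hqy hb]

theorem smul_mem_wedge_s18 {s r : ℝ} (hs : 0 ≤ s) (hr : 0 ≤ r) (hpr : p ≤ r) (hrq : r ≤ q) :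
    s • ((1 : ℝ), r) ∈ {x : ℝ × ℝ | (0 ≤ x.1 ∧ 0 ≤ x.2) ∧ (p * x.1 ≤ x.2 ∧ x.2 ≤ q * x.1)} := by
  simp only [Prod.smul_mk, smul_eq_mul, mul_one, mem_ofPred_eq]
  exact ⟨⟨hs, mul_nonneg hs hr⟩, by nlinarith, by nlinarith⟩

end Wedge

/-! Throughout, `μ (d₂ - d₁ t)` is the secant of `t ↦ t ^ c` over `[p, q]`, so that
`μ (d₂ x₁ - d₁ x₂)` agrees with `x₁ ^ (1 - c) * x₂ ^ c` on the rays `x₂ = p x₁` and `x₂ = q x₁`. -/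

section Secant

variable {c p q d₁ d₂ μ : ℝ}

theorem sub_mul_linear_eq (hμp : μ * (d₂ - d₁ * p) = p ^ c) (hμq : μ * (d₂ - d₁ * q) = q ^ c)
    (x : ℝ × ℝ) : (q - p) * (μ * (d₂ * x.1 - d₁ * x.2)) =
      (q * x.1 - x.2) * p ^ c + (x.2 - p * x.1) * q ^ c := by
  linear_combination (q * x.1 - x.2) * hμp + (x.2 - p * x.1) * hμq

theorem linear_pos_of_mem_wedge (hp : 0 < p) (hpq : p < q) (hμ : 0 < μ)
    (hμp : μ * (d₂ - d₁ * p) = p ^ c) (hμq : μ * (d₂ - d₁ * q) = q ^ c) {x : ℝ × ℝ}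
    (hx : 0 < x.1) (hpx : p * x.1 ≤ x.2) (hqx : x.2 ≤ q * x.1) :
    0 < d₂ * x.1 - d₁ * x.2 := by
  have hqp : 0 < q - p := sub_pos.2 hpq
  have hpc : 0 < p ^ c := rpow_pos_of_pos hp c
  have hqc : 0 < q ^ c := rpow_pos_of_pos (hp.trans hpq) c
  have h : 0 < (q - p) * (μ * (d₂ * x.1 - d₁ * x.2)) := by
    rw [sub_mul_linear_eq hμp hμq]
    rcases (sub_nonneg.2 hqx).eq_or_lt with h | h
    · rw [← h, zero_mul, zero_add]
      exact mul_pos (by linarith [mul_pos hqp hx]) hqc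
    · exact add_pos_of_pos_of_nonneg (mul_pos h hpc) (mul_nonneg (sub_nonneg.2 hpx) hqc.le)
  exact (mul_pos_iff_of_pos_left hμ).1 ((mul_pos_iff_of_pos_left hqp).1 h)

theorem linear_le_rpow_mul_rpow (hc₀ : 0 ≤ c) (hc₁ : c ≤ 1) (hp : 0 ≤ p) (hpq : p < q)
    (hμp : μ * (d₂ - d₁ * p) = p ^ c) (hμq : μ * (d₂ - d₁ * q) = q ^ c) {x : ℝ × ℝ}
    (hx : 0 < x.1) (hpx : p * x.1 ≤ x.2) (hqx : x.2 ≤ q * x.1) :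
    μ * (d₂ * x.1 - d₁ * x.2) ≤ x.1 ^ (1 - c) * x.2 ^ c := by
  have hqp : 0 < q - p := sub_pos.2 hpq
  set a := (q * x.1 - x.2) / ((q - p) * x.1)
  set b := (x.2 - p * x.1) / ((q - p) * x.1)
  have hab : a + b = 1 := by simp only [a, b]; field_simp; ring
  have hconc := (concaveOn_rpow hc₀ hc₁).2 (mem_Ici.2 hp) (mem_Ici.2 (hp.trans hpq.le))
    (by positivity : 0 ≤ a) (by positivity : 0 ≤ b) hab
  have ht : a • p + b • q = x.2 / x.1 := by simp only [smul_eq_mul, a, b]; field_simp; ring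
  beta_reduce at hconc
  rw [ht, smul_eq_mul, smul_eq_mul, div_rpow ((mul_nonneg hp hx.le).trans hpx) hx.le] at hconc
  calc μ * (d₂ * x.1 - d₁ * x.2) = x.1 * (a * p ^ c + b * q ^ c) := by
        rw [← hμp, ← hμq]; simp only [a, b]; field_simp; ring
    _ ≤ x.1 * (x.2 ^ c / x.1 ^ c) := by gcongr
    _ = x.1 ^ (1 - c) * x.2 ^ c := by rw [rpow_sub hx, rpow_one]; ring

end Secant

section Envelope

variable {a₁ a₂ β ℓ p q d₁ d₂ μ : ℝ}

theorem exists_secant_scale {lam : ℝ} (ha₁ : 0 < a₁) (ha₂ : 0 < a₂) (hβ : β = a₁ + a₂)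
    (hp : 0 < p) (hpq : p < q) (hd₁ : d₁ = q ^ (-(a₂ / β)) - p ^ (-(a₂ / β)))
    (hd₂ : d₂ = q ^ (a₁ / β) - p ^ (a₁ / β)) (hlam : lam = p ^ a₂ / (d₂ - d₁ * p) ^ β) :
    ∃ μ > 0, lam = μ ^ β ∧ μ * (d₂ - d₁ * p) = p ^ (a₂ / β) ∧
      μ * (d₂ - d₁ * q) = q ^ (a₂ / β) := by
  have hβ₀ : 0 < β := by linarith
  have hq : 0 < q := hp.trans hpq
  have hqp : 0 < q - p := sub_pos.2 hpq
  have hc : a₁ / β = -(a₂ / β) + 1 := by field_simp; linarith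
  have hA : d₂ - d₁ * p = q ^ (-(a₂ / β)) * (q - p) := by
    rw [hd₁, hd₂, hc, rpow_add_one hq.ne', rpow_add_one hp.ne']; ring
  have hB : d₂ - d₁ * q = p ^ (-(a₂ / β)) * (q - p) := by
    rw [hd₁, hd₂, hc, rpow_add_one hq.ne', rpow_add_one hp.ne']; ring
  have hA₀ : 0 < d₂ - d₁ * p := hA ▸ by positivity
  refine ⟨p ^ (a₂ / β) / (d₂ - d₁ * p), by positivity, ?_, by field_simp, ?_⟩
  · rw [hlam, div_rpow (by positivity) hA₀.le, ← rpow_mul hp.le, div_mul_cancel₀ _ hβ₀.ne']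
  · rw [hA, hB, rpow_neg hp.le, rpow_neg hq.le]
    field_simp

theorem rpow_mul_linear_rpow_le_of_mem_wedge (ha₁ : 0 < a₁) (ha₂ : 0 < a₂) (hβ : β = a₁ + a₂)
    (hp : 0 < p) (hpq : p < q) (hμ : 0 < μ) (hμp : μ * (d₂ - d₁ * p) = p ^ (a₂ / β))
    (hμq : μ * (d₂ - d₁ * q) = q ^ (a₂ / β)) {x : ℝ × ℝ} (hx : 0 < x.1) (hpx : p * x.1 ≤ x.2)
    (hqx : x.2 ≤ q * x.1) :
    μ ^ β * (d₂ * x.1 - d₁ * x.2) ^ β ≤ x.1 ^ a₁ * x.2 ^ a₂ := by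
  have hβ₀ : 0 < β := by linarith
  have hx₂ : 0 ≤ x.2 := (mul_nonneg hp.le hx.le).trans hpx
  have hL := (linear_pos_of_mem_wedge hp hpq hμ hμp hμq hx hpx hqx).le
  have h₁ : (1 - a₂ / β) * β = a₁ := by field_simp; linarith
  have h₂ : a₂ / β * β = a₂ := div_mul_cancel₀ a₂ hβ₀.ne'
  calc μ ^ β * (d₂ * x.1 - d₁ * x.2) ^ β = (μ * (d₂ * x.1 - d₁ * x.2)) ^ β :=
        (mul_rpow hμ.le hL).symm
    _ ≤ (x.1 ^ (1 - a₂ / β) * x.2 ^ (a₂ / β)) ^ β :=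
        rpow_le_rpow (mul_nonneg hμ.le hL) (linear_le_rpow_mul_rpow (by positivity)
          (div_le_one_of_le₀ (by linarith) hβ₀.le) hp.le hpq hμp hμq hx hpx hqx) hβ₀.le
    _ = x.1 ^ a₁ * x.2 ^ a₂ := by
        rw [mul_rpow (by positivity) (by positivity), ← rpow_mul hx.le, ← rpow_mul hx₂, h₁, h₂]

theorem rpow_mul_rpow_smul_eq (ha₁ : 0 < a₁) (ha₂ : 0 < a₂) (hβ : β = a₁ + a₂) {r m : ℝ}
    (hr : 0 < r) (hm : 0 ≤ m) (hμ : 0 < μ) (hμr : μ * (d₂ - d₁ * r) = r ^ (a₂ / β)) :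
    ((m / (d₂ - d₁ * r)) • ((1 : ℝ), r)).1 ^ a₁ * ((m / (d₂ - d₁ * r)) • ((1 : ℝ), r)).2 ^ a₂ =
      μ ^ β * m ^ β := by
  have hβ₀ : 0 < β := by linarith
  have hD : 0 < d₂ - d₁ * r := pos_of_mul_pos_right (hμr ▸ rpow_pos_of_pos hr _) hμ.le
  set s := m / (d₂ - d₁ * r)
  simp only [Prod.smul_mk, smul_eq_mul, mul_one]
  calc s ^ a₁ * (s * r) ^ a₂ = s ^ (a₁ + a₂) * (r ^ (a₂ / β)) ^ β := by
        rw [mul_rpow (by positivity) hr.le, ← rpow_mul hr.le, div_mul_cancel₀ a₂ hβ₀.ne',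
          rpow_add' (by positivity) (by linarith)]
        ring
    _ = (μ * m) ^ β := by
        rw [← hβ, ← mul_rpow (by positivity) (by positivity), ← hμr]
        congr 1
        simp only [s]
        field_simp
    _ = μ ^ β * m ^ β := mul_rpow hμ.le hm

theorem convex_envelope_epigraph (ha₁ : 0 < a₁) (ha₂ : 0 < a₂) (hβ : 1 ≤ β) (hℓ : 0 < ℓ)
    (hp : 0 < p) (hpq : p < q) (hμ : 0 < μ) {c : ℝ} (hμp : μ * (d₂ - d₁ * p) = p ^ c)
    (hμq : μ * (d₂ - d₁ * q) = q ^ c) (R : ℝ) :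
    Convex ℝ {xz : (ℝ × ℝ) × ℝ |
      ((0 ≤ xz.1.1 ∧ 0 ≤ xz.1.2) ∧ (p * xz.1.1 ≤ xz.1.2 ∧ xz.1.2 ≤ q * xz.1.1) ∧
        ℓ ≤ xz.1.1 ^ a₁ * xz.1.2 ^ a₂ ∧ d₂ * xz.1.1 - d₁ * xz.1.2 ≤ R) ∧
      μ ^ β * (d₂ * xz.1.1 - d₁ * xz.1.2) ^ β ≤ xz.2 ∧ ℓ ≤ xz.2} := by
  set Y := {x : ℝ × ℝ | (0 ≤ x.1 ∧ 0 ≤ x.2) ∧ (p * x.1 ≤ x.2 ∧ x.2 ≤ q * x.1) ∧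
    ℓ ≤ x.1 ^ a₁ * x.2 ^ a₂ ∧ d₂ * x.1 - d₁ * x.2 ≤ R}
  let L : ℝ × ℝ →ₗ[ℝ] ℝ := d₂ • LinearMap.fst ℝ ℝ ℝ - d₁ • LinearMap.snd ℝ ℝ ℝ
  have hY : Convex ℝ Y := by
    convert (convex_wedge_s18.inter (convex_superlevel_rpow_mul_rpow ha₁ ha₂ hℓ)).inter
      (convex_halfSpace_le L.isLinear R) using 1
    ext x
    simp [Y, L]
    tauto
  have hYL : Y ⊆ L ⁻¹' Ici 0 := fun x hx => by
    simpa [L] using (linear_pos_of_mem_wedge hp hpq hμ hμp hμq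
      (pos_of_le_rpow_mul_rpow ha₁ ha₂ hℓ hx.1 hx.2.2.1).1 hx.2.1.1 hx.2.1.2).le
  have hg := ((((convexOn_rpow hβ).comp_linearMap L).subset hYL hY).smul
    (rpow_nonneg hμ.le β)).sup (convexOn_const ℓ hY)
  refine (congrArg (Convex ℝ) ?_).mpr hg.convex_epigraph
  ext xz
  simp [Y, L]

theorem mem_convexHull_epigraph_of_envelope_le (ha₁ : 0 < a₁) (ha₂ : 0 < a₂)
    (hβ : β = a₁ + a₂) (hp : 0 < p) (hpq : p < q) (hμ : 0 < μ)
    (hμp : μ * (d₂ - d₁ * p) = p ^ (a₂ / β)) (hμq : μ * (d₂ - d₁ * q) = q ^ (a₂ / β))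
    {u z : ℝ} (hℓu : ℓ ≤ u) (hℓz : ℓ ≤ z) {x : ℝ × ℝ} (hx : 0 < x.1) (hpx : p * x.1 ≤ x.2)
    (hqx : x.2 ≤ q * x.1) (hℓx : ℓ ≤ x.1 ^ a₁ * x.2 ^ a₂)
    (hxu : μ ^ β * (d₂ * x.1 - d₁ * x.2) ^ β ≤ u) (hxz : μ ^ β * (d₂ * x.1 - d₁ * x.2) ^ β ≤ z) :
    (x, z) ∈ convexHull ℝ {xz : (ℝ × ℝ) × ℝ |
      ((0 ≤ xz.1.1 ∧ 0 ≤ xz.1.2) ∧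
        (ℓ ≤ xz.1.1 ^ a₁ * xz.1.2 ^ a₂ ∧ xz.1.1 ^ a₁ * xz.1.2 ^ a₂ ≤ u) ∧
        (p * xz.1.1 ≤ xz.1.2 ∧ xz.1.2 ≤ q * xz.1.1)) ∧
      xz.1.1 ^ a₁ * xz.1.2 ^ a₂ ≤ xz.2} := by
  have hqp : 0 < q - p := sub_pos.2 hpq
  have hA : 0 < d₂ - d₁ * p := pos_of_mul_pos_right (hμp ▸ rpow_pos_of_pos hp _) hμ.le
  have hB : 0 < d₂ - d₁ * q :=
    pos_of_mul_pos_right (hμq ▸ rpow_pos_of_pos (hp.trans hpq) _) hμ.le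
  set m := d₂ * x.1 - d₁ * x.2
  have hm : 0 < m := linear_pos_of_mem_wedge hp hpq hμ hμp hμq hx hpx hqx
  set α := (q * x.1 - x.2) / (q - p)
  set γ := (x.2 - p * x.1) / (q - p)
  have hx_eq : x = α • ((1 : ℝ), p) + γ • ((1 : ℝ), q) := by
    ext <;> simp only [α, γ, Prod.smul_mk, Prod.fst_add, Prod.snd_add, smul_eq_mul] <;>
      field_simp <;> ring
  have hm_eq : m = α * (d₂ - d₁ * p) + γ * (d₂ - d₁ * q) := by
    simp only [m, α, γ]; field_simp; ring
  have hseg := smul_add_smul_mem_segment_s18 hA hB (div_nonneg (by linarith) hqp.le)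
    (div_nonneg (by linarith) hqp.le) (hm_eq ▸ hm) ((1 : ℝ), p) ((1 : ℝ), q)
  rw [← hm_eq, ← hx_eq] at hseg
  refine mem_convexHull_of_mem_segment convex_wedge_s18
    (f := fun y : ℝ × ℝ => y.1 ^ a₁ * y.2 ^ a₂) (b := min u z) ?_
    (smul_mem_wedge_s18 (div_nonneg hm.le hA.le) hp.le le_rfl hpq.le)
    (smul_mem_wedge_s18 (div_nonneg hm.le hB.le) (hp.trans hpq).le hpq.le le_rfl) hseg ?_ ?_ ?_
    (le_min hℓu hℓz) hℓx
  · rintro y hy ⟨hℓy, hyb⟩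
    exact ⟨⟨hy.1, ⟨hℓy, (le_min_iff.1 hyb).1⟩, hy.2⟩, (le_min_iff.1 hyb).2⟩
  · exact ((continuous_fst.rpow_const fun _ => Or.inr ha₁.le).mul
      (continuous_snd.rpow_const fun _ => Or.inr ha₂.le)).continuousOn
  · rw [rpow_mul_rpow_smul_eq ha₁ ha₂ hβ hp hm.le hμ hμp]
    exact le_min hxu hxz
  · rw [rpow_mul_rpow_smul_eq ha₁ ha₂ hβ (hp.trans hpq) hm.le hμ hμq]
    exact le_min hxu hxz

end Envelope

/-- For `n = 2` and `β = a₁ + a₂ ≥ 1`, the lower envelope of `f` over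
`X ∩ W₁₂` equals `H = {(x,z) : x ∈ Y, z ≥ λ (d₂ x₁ − d₁ x₂)^β, z ≥ ℓ}`. -/
theorem lower_envelope_n2_of_one_le_beta (a₁ a₂ ℓ u p q β d₁ d₂ lam : ℝ)
    (ha₁ : 0 < a₁) (ha₂ : 0 < a₂) (hβ : β = a₁ + a₂) (hβ1 : 1 ≤ β)
    (hℓ : 0 < ℓ) (hℓu : ℓ < u) (hp : 0 < p) (hpq : p < q)
    (hd₁ : d₁ = q ^ (-(a₂ / β)) - p ^ (-(a₂ / β)))
    (hd₂ : d₂ = q ^ (a₁ / β) - p ^ (a₁ / β))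
    (hlam : lam = p ^ a₂ / (d₂ - d₁ * p) ^ β) :
    convexHull ℝ
      {xz : (ℝ × ℝ) × ℝ |
        ((0 ≤ xz.1.1 ∧ 0 ≤ xz.1.2) ∧
          (ℓ ≤ xz.1.1 ^ a₁ * xz.1.2 ^ a₂ ∧ xz.1.1 ^ a₁ * xz.1.2 ^ a₂ ≤ u) ∧
          (p * xz.1.1 ≤ xz.1.2 ∧ xz.1.2 ≤ q * xz.1.1)) ∧
        xz.1.1 ^ a₁ * xz.1.2 ^ a₂ ≤ xz.2} =
    {xz : (ℝ × ℝ) × ℝ |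
        ((0 ≤ xz.1.1 ∧ 0 ≤ xz.1.2) ∧
          (p * xz.1.1 ≤ xz.1.2 ∧ xz.1.2 ≤ q * xz.1.1) ∧
          ℓ ≤ xz.1.1 ^ a₁ * xz.1.2 ^ a₂ ∧
          d₂ * xz.1.1 - d₁ * xz.1.2 ≤ (u / lam) ^ (1 / β)) ∧
        lam * (d₂ * xz.1.1 - d₁ * xz.1.2) ^ β ≤ xz.2 ∧
        ℓ ≤ xz.2} := by
  obtain ⟨μ, hμ, rfl, hμp, hμq⟩ := exists_secant_scale ha₁ ha₂ hβ hp hpq hd₁ hd₂ hlam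
  have hu : 0 < u := hℓ.trans hℓu
  have hcap : ∀ x : ℝ × ℝ, 0 < x.1 → p * x.1 ≤ x.2 → x.2 ≤ q * x.1 →
      (d₂ * x.1 - d₁ * x.2 ≤ (u / μ ^ β) ^ (1 / β) ↔ μ ^ β * (d₂ * x.1 - d₁ * x.2) ^ β ≤ u) :=
    fun x hx hpx hqx => le_div_rpow_one_div_iff (by positivity)
      (linear_pos_of_mem_wedge hp hpq hμ hμp hμq hx hpx hqx).le hu.le (by linarith)
  apply Subset.antisymm
  · refine convexHull_min ?_ (convex_envelope_epigraph ha₁ ha₂ hβ1 hℓ hp hpq hμ hμp hμq _)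
    rintro ⟨x, z⟩ ⟨⟨hx, ⟨hℓx, hxu⟩, hpx, hqx⟩, hxz⟩
    have hx₁ := (pos_of_le_rpow_mul_rpow ha₁ ha₂ hℓ hx hℓx).1
    have henv := rpow_mul_linear_rpow_le_of_mem_wedge ha₁ ha₂ hβ hp hpq hμ hμp hμq hx₁ hpx hqx
    exact ⟨⟨hx, ⟨hpx, hqx⟩, hℓx, (hcap x hx₁ hpx hqx).2 (henv.trans hxu)⟩, henv.trans hxz,
      hℓx.trans hxz⟩
  · rintro ⟨x, z⟩ ⟨⟨hx, ⟨hpx, hqx⟩, hℓx, hxu⟩, hxz, hℓz⟩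
    have hx₁ := (pos_of_le_rpow_mul_rpow ha₁ ha₂ hℓ hx hℓx).1
    exact mem_convexHull_epigraph_of_envelope_le ha₁ ha₂ hβ hp hpq hμ hμp hμq hℓu.le hℓz hx₁
      hpx hqx hℓx ((hcap x hx₁ hpx hqx).1 hxu) hxz
end

section
/- For n = 2 and β = a₁ + a₂ ≤ 1, the lower envelope of f over X ∩ W₁₂, i.e. the convex hull of the epigraph {(x,z) ∈ (X ∩ W₁₂) × ℝ : z ≥ f(x)}, equals H = {(x,z) ∈ ℝ₊² × ℝ : x ∈ Y, z ≥ ζ (d₂ x₁ − d₁ x₂) + z₀, and z ≥ ℓ}. -/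
/-
Write `s(x) = d₂ x₁ - d₁ x₂`. The constants are chosen so that `f = λ s ^ β` on the two boundary
rays `x₂ = p x₁` and `x₂ = q x₁` of the sector and `λ s ^ β ≤ f` inside it: with `t = x₂ / x₁`
this says that the concave function `t ^ (a₂ / β)` lies above its chord over `[p, q]`. For
`β ≤ 1` the map `σ ↦ λ σ ^ β` is concave too, and `ζ σ + z₀` is its chord between the levels
`σl < σu` at which it takes the values `ℓ` and `u`; so `max ℓ (ζ s + z₀)` bounds `f` from below
on the epigraph, which is therefore contained in the convex set `H`.

Conversely, a point of `H` lies on the segment cut out of its level line `s = const` by the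
sector. Below the level `σl` both ends of that segment have `f ≤ ℓ`, and the intermediate value
theorem gives two points with `f = ℓ` on either side of it. Above `σl`, each end lies on a
boundary ray, where `f` is `λ σ ^ β`, and is a convex combination of the points of that ray at
levels `σl` and `σu`, lifted by the same height.
-/

open Real Set

theorem ConcaveOn.affine_le_of_mem_Icc {s : Set ℝ} {g : ℝ → ℝ} {a b m c x : ℝ}
    (hg : ConcaveOn ℝ s g) (ha : a ∈ s) (hb : b ∈ s)
    (hga : m * a + c ≤ g a) (hgb : m * b + c ≤ g b) (hx : x ∈ Icc a b) :
    m * x + c ≤ g x := by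
  rw [← segment_eq_Icc (hx.1.trans hx.2)] at hx
  obtain ⟨θ, τ, hθ, hτ, hθτ, rfl⟩ := hx
  have hconc := hg.2 ha hb hθ hτ hθτ
  simp only [smul_eq_mul] at hconc ⊢
  have hc : c = θ * c + τ * c := by rw [← add_mul, hθτ, one_mul]
  nlinarith [mul_le_mul_of_nonneg_left hga hθ, mul_le_mul_of_nonneg_left hgb hτ]

theorem affine_le_max_of_chord {β lam ζ z₀ ℓ σl σu σ : ℝ} (hβ0 : 0 ≤ β) (hβ1 : β ≤ 1)
    (hlam : 0 ≤ lam) (hζ : 0 ≤ ζ) (hσl : 0 ≤ σl) (hℓ : lam * σl ^ β = ℓ)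
    (hζl : ζ * σl + z₀ = ℓ) (hζu : ζ * σu + z₀ ≤ lam * σu ^ β) (hσ : σ ≤ σu) :
    ζ * σ + z₀ ≤ max ℓ (lam * σ ^ β) := by
  rcases le_total σ σl with h | h
  · exact le_max_of_le_left (by nlinarith)
  · refine le_max_of_le_right ?_
    exact ((concaveOn_rpow hβ0 hβ1).smul hlam).affine_le_of_mem_Icc (mem_Ici.2 hσl)
      (mem_Ici.2 (hσl.trans (h.trans hσ))) (by simp [hℓ, hζl]) hζu ⟨h, hσ⟩

theorem smul_add_smul_mem_segment_s19 {𝕜 E : Type*} [Field 𝕜] [LinearOrder 𝕜] [IsStrictOrderedRing 𝕜]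
    [AddCommGroup E] [Module 𝕜 E] (u w : E) {α β : 𝕜} (hα : 0 ≤ α) (hβ : 0 ≤ β) :
    α • u + β • w ∈ segment 𝕜 ((α + β) • u) ((α + β) • w) := by
  rcases (add_nonneg hα hβ).eq_or_lt with h | h
  · obtain ⟨rfl, rfl⟩ : α = 0 ∧ β = 0 := ⟨by linarith, by linarith⟩
    simp
  · refine ⟨α / (α + β), β / (α + β), by positivity, by positivity, by field_simp, ?_⟩
    simp only [smul_smul, div_mul_cancel₀ _ h.ne']

theorem ContinuousOn.exists_apply_eq_on_segment_around {E : Type*} [AddCommGroup E] [Module ℝ E]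
    [TopologicalSpace E] [ContinuousAdd E] [ContinuousSMul ℝ E] {f : E → ℝ} {P Q x : E} {c : ℝ}
    (hf : ContinuousOn f (segment ℝ P Q)) (hx : x ∈ segment ℝ P Q)
    (hP : f P ≤ c) (hQ : f Q ≤ c) (hc : c ≤ f x) :
    ∃ y₁ ∈ segment ℝ P Q, ∃ y₂ ∈ segment ℝ P Q, f y₁ = c ∧ f y₂ = c ∧ x ∈ segment ℝ y₁ y₂ := by
  have hPx : segment ℝ P x ⊆ segment ℝ P Q :=
    (convex_segment P Q).segment_subset (left_mem_segment ℝ P Q) hx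
  have hQx : segment ℝ Q x ⊆ segment ℝ P Q :=
    (convex_segment P Q).segment_subset (right_mem_segment ℝ P Q) hx
  obtain ⟨y₁, hy₁, rfl⟩ := (convex_segment P x).isPreconnected.intermediate_value
    (left_mem_segment ℝ P x) (right_mem_segment ℝ P x) (hf.mono hPx) ⟨hP, hc⟩
  obtain ⟨y₂, hy₂, hfy₂⟩ := (convex_segment Q x).isPreconnected.intermediate_value
    (left_mem_segment ℝ Q x) (right_mem_segment ℝ Q x) (hf.mono hQx) ⟨hQ, hc⟩
  refine ⟨y₁, hPx hy₁, y₂, hQx hy₂, rfl, hfy₂, ?_⟩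
  rw [mem_segment_iff_wbtw] at hx hy₁ hy₂ ⊢
  exact ((hx.trans_left_right hy₁).symm.trans_left_right hy₂).symm

theorem mk_mem_convexHull_of_mem_segment {E F : Type*} [AddCommGroup E] [Module ℝ E]
    [AddCommGroup F] [Module ℝ F] {S : Set (E × F)} {x y₁ y₂ : E} {z : F}
    (hx : x ∈ segment ℝ y₁ y₂) (h₁ : (y₁, z) ∈ convexHull ℝ S) (h₂ : (y₂, z) ∈ convexHull ℝ S) :
    (x, z) ∈ convexHull ℝ S :=
  (convex_convexHull ℝ S).segment_subset h₁ h₂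
    (Prod.image_mk_segment_left (𝕜 := ℝ) y₁ y₂ z ▸ mem_image_of_mem (·, z) hx)

theorem convex_setOf_le_rpow_mul_rpow {a₁ a₂ ℓ : ℝ} (ha₁ : 0 ≤ a₁) (ha₂ : 0 ≤ a₂) (hℓ : 0 ≤ ℓ) :
    Convex ℝ {x : ℝ × ℝ | 0 ≤ x.1 ∧ 0 ≤ x.2 ∧ ℓ ≤ x.1 ^ a₁ * x.2 ^ a₂} := by
  rintro ⟨x₁, x₂⟩ ⟨hx₁, hx₂, hx⟩ ⟨y₁, y₂⟩ ⟨hy₁, hy₂, hy⟩ θ τ hθ hτ hθτ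
  simp only [mem_ofPred_eq, Prod.smul_mk, Prod.mk_add_mk, smul_eq_mul] at hx hy ⊢
  refine ⟨by positivity, by positivity, ?_⟩
  calc ℓ = ℓ ^ θ * ℓ ^ τ := by rw [← rpow_add' hℓ (by rw [hθτ]; exact one_ne_zero), hθτ, rpow_one]
    _ ≤ (x₁ ^ a₁ * x₂ ^ a₂) ^ θ * (y₁ ^ a₁ * y₂ ^ a₂) ^ τ := by gcongr
    _ = (x₁ ^ θ * y₁ ^ τ) ^ a₁ * (x₂ ^ θ * y₂ ^ τ) ^ a₂ := by
        simp only [mul_rpow, rpow_nonneg, ← rpow_mul, hx₁, hx₂, hy₁, hy₂]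
        ring_nf
    _ ≤ (θ * x₁ + τ * y₁) ^ a₁ * (θ * x₂ + τ * y₂) ^ a₂ := by
        gcongr <;> exact geom_mean_le_arith_mean2_weighted hθ hτ (by assumption) (by assumption) hθτ

theorem sub_rpow_sub_mul_eq {p q r e₁ e₂ : ℝ} (hp : 0 < p) (hq : 0 < q) (he : e₁ + e₂ = 1) :
    (q ^ e₁ - p ^ e₁) - (q ^ (-e₂) - p ^ (-e₂)) * r
      = q ^ (-e₂) * (q - r) + p ^ (-e₂) * (r - p) := by
  have h : e₁ = -e₂ + 1 := by linarith
  rw [h, rpow_add hq, rpow_add hp, rpow_one, rpow_one]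
  ring

theorem rpow_div_rpow_neg_mul_rpow_eq {p q w a β : ℝ} (hp : 0 ≤ p) (hq : 0 < q) (hw : 0 ≤ w)
    (hβ : β ≠ 0) : p ^ a / (q ^ (-(a / β)) * w) ^ β = (p * q) ^ a / w ^ β := by
  rw [mul_rpow (rpow_nonneg hq.le _) hw, ← rpow_mul hq.le, neg_mul, div_mul_cancel₀ _ hβ,
    rpow_neg hq.le, mul_rpow hp hq.le]
  field_simp

-- The last two conjuncts say that `f = λ s ^ β` on both boundary rays of the sector.
theorem sector_coefficients {a₁ a₂ p q d₁ d₂ lam : ℝ} (ha₁ : 0 < a₁) (ha₂ : 0 < a₂) (hp : 0 < p)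
    (hpq : p < q) (hd₁ : d₁ = q ^ (-(a₂ / (a₁ + a₂))) - p ^ (-(a₂ / (a₁ + a₂))))
    (hd₂ : d₂ = q ^ (a₁ / (a₁ + a₂)) - p ^ (a₁ / (a₁ + a₂)))
    (hlam : lam = p ^ a₂ / (d₂ - d₁ * p) ^ (a₁ + a₂)) :
    d₁ < 0 ∧ 0 < d₂ ∧ 0 < lam ∧ lam * (d₂ - d₁ * p) ^ (a₁ + a₂) = p ^ a₂ ∧
      lam * (d₂ - d₁ * q) ^ (a₁ + a₂) = q ^ a₂ := by
  have hβ : 0 < a₁ + a₂ := by positivity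
  have hq : 0 < q := hp.trans hpq
  have hqp : 0 < q - p := sub_pos.2 hpq
  have he : a₁ / (a₁ + a₂) + a₂ / (a₁ + a₂) = 1 := by field_simp
  have hDp : d₂ - d₁ * p = q ^ (-(a₂ / (a₁ + a₂))) * (q - p) := by
    rw [hd₁, hd₂, sub_rpow_sub_mul_eq hp hq he]; ring
  have hDq : d₂ - d₁ * q = p ^ (-(a₂ / (a₁ + a₂))) * (q - p) := by
    rw [hd₁, hd₂, sub_rpow_sub_mul_eq hp hq he]; ring
  refine ⟨?_, ?_, by rw [hlam, hDp]; positivity, ?_, ?_⟩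
  · rw [hd₁, sub_neg]; exact rpow_lt_rpow_of_neg hp hpq (neg_neg_of_pos (by positivity))
  · rw [hd₂, sub_pos]; exact rpow_lt_rpow hp.le hpq (by positivity)
  · rw [hlam, div_mul_cancel₀ _ (by rw [hDp]; positivity)]
  · rw [hlam, hDp, hDq, rpow_div_rpow_neg_mul_rpow_eq hp.le hq hqp.le hβ.ne', mul_comm p q,
      ← rpow_div_rpow_neg_mul_rpow_eq hq.le hp hqp.le hβ.ne', div_mul_cancel₀ _ (by positivity)]

theorem rpow_inv_mul_eq_of_mul_rpow_eq {lam D r a β : ℝ} (hlam : 0 ≤ lam) (hD : 0 ≤ D)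
    (hr : 0 ≤ r) (hβ : β ≠ 0) (h : lam * D ^ β = r ^ a) : lam ^ β⁻¹ * D = r ^ (a / β) := by
  have := congrArg (· ^ β⁻¹) h
  rwa [mul_rpow hlam (rpow_nonneg hD _), rpow_rpow_inv hD hβ, ← rpow_mul hr,
    ← div_eq_mul_inv] at this

theorem lam_mul_div_rpow_one_div {lam β v : ℝ} (hlam : 0 < lam) (hv : 0 ≤ v) (hβ : β ≠ 0) :
    lam * ((v / lam) ^ (1 / β)) ^ β = v := by
  rw [one_div, rpow_inv_rpow (div_nonneg hv hlam.le) hβ]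
  field_simp

theorem chord_rpow_one_div_eq {lam β ℓ u v : ℝ} (hlam : 0 < lam) (hv : 0 ≤ v)
    (hℓu : ℓ ^ (1 / β) ≠ u ^ (1 / β)) (huv : v = ℓ ∨ v = u) :
    lam ^ (1 / β) * (u - ℓ) / (u ^ (1 / β) - ℓ ^ (1 / β)) * (v / lam) ^ (1 / β)
      + (u ^ (1 / β) * ℓ - ℓ ^ (1 / β) * u) / (u ^ (1 / β) - ℓ ^ (1 / β)) = v := by
  have hlam' : lam ^ (1 / β) ≠ 0 := (rpow_pos_of_pos hlam _).ne'
  have hden : u ^ (1 / β) - ℓ ^ (1 / β) ≠ 0 := sub_ne_zero.2 hℓu.symm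
  rw [div_rpow hv hlam.le]
  rcases huv with rfl | rfl <;> field_simp <;> ring

def sector (p q : ℝ) : Set (ℝ × ℝ) := {x | (0 ≤ x.1 ∧ 0 ≤ x.2) ∧ p * x.1 ≤ x.2 ∧ x.2 ≤ q * x.1}

-- The point of slope `r` on the line `d₂ x₁ - d₁ x₂ = 1`.
noncomputable def rayPoint (d₁ d₂ r : ℝ) : ℝ × ℝ := ((d₂ - d₁ * r)⁻¹, r * (d₂ - d₁ * r)⁻¹)

section Sector

variable {a₁ a₂ p q d₁ d₂ lam : ℝ}

theorem convex_sector : Convex ℝ (sector p q) := by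
  rintro x ⟨⟨hx₁, hx₂⟩, hpx, hxq⟩ y ⟨⟨hy₁, hy₂⟩, hpy, hyq⟩ a b ha hb -
  simp only [sector, mem_ofPred_eq, Prod.fst_add, Prod.snd_add, Prod.smul_fst, Prod.smul_snd,
    smul_eq_mul]
  refine ⟨⟨by positivity, by positivity⟩, ?_, ?_⟩
  · nlinarith [mul_le_mul_of_nonneg_left hpx ha, mul_le_mul_of_nonneg_left hpy hb]
  · nlinarith [mul_le_mul_of_nonneg_left hxq ha, mul_le_mul_of_nonneg_left hyq hb]

theorem smul_rayPoint_mem_sector {r σ : ℝ} (hp : 0 ≤ p) (hpr : p ≤ r) (hrq : r ≤ q)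
    (hD : 0 < d₂ - d₁ * r) (hσ : 0 ≤ σ) : σ • rayPoint d₁ d₂ r ∈ sector p q := by
  have hk : 0 ≤ σ * (d₂ - d₁ * r)⁻¹ := by positivity
  simp only [sector, rayPoint, mem_ofPred_eq, Prod.smul_mk, smul_eq_mul]
  refine ⟨⟨hk, by nlinarith⟩, by nlinarith, by nlinarith⟩

theorem smul_rayPoint_rpow {r σ : ℝ} (hr : 0 ≤ r) (hD : 0 < d₂ - d₁ * r) (hσ : 0 ≤ σ)
    (hβ : a₁ + a₂ ≠ 0) (hlam : lam * (d₂ - d₁ * r) ^ (a₁ + a₂) = r ^ a₂) :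
    (σ • rayPoint d₁ d₂ r).1 ^ a₁ * (σ • rayPoint d₁ d₂ r).2 ^ a₂ = lam * σ ^ (a₁ + a₂) := by
  simp only [rayPoint, Prod.smul_mk, smul_eq_mul]
  rw [mul_rpow hσ (by positivity), mul_rpow hσ (by positivity), mul_rpow hr (by positivity),
    inv_rpow hD.le, inv_rpow hD.le, ← hlam, rpow_add' hσ hβ, rpow_add' hD.le hβ]
  field_simp

theorem mem_segment_smul_rayPoint (hpq : p < q) (hDp : 0 < d₂ - d₁ * p) (hDq : 0 < d₂ - d₁ * q)
    {x : ℝ × ℝ} (hpx : p * x.1 ≤ x.2) (hxq : x.2 ≤ q * x.1) :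
    x ∈ segment ℝ ((d₂ * x.1 - d₁ * x.2) • rayPoint d₁ d₂ p)
      ((d₂ * x.1 - d₁ * x.2) • rayPoint d₁ d₂ q) := by
  have hqp : 0 < q - p := sub_pos.2 hpq
  have hα : 0 ≤ (d₂ - d₁ * p) * (q * x.1 - x.2) / (q - p) :=
    div_nonneg (mul_nonneg hDp.le (by linarith)) hqp.le
  have hβ : 0 ≤ (d₂ - d₁ * q) * (x.2 - p * x.1) / (q - p) :=
    div_nonneg (mul_nonneg hDq.le (by linarith)) hqp.le
  have hseg := smul_add_smul_mem_segment_s19 (rayPoint d₁ d₂ p) (rayPoint d₁ d₂ q) hα hβ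
  have hsum : (d₂ - d₁ * p) * (q * x.1 - x.2) / (q - p) + (d₂ - d₁ * q) * (x.2 - p * x.1) / (q - p)
      = d₂ * x.1 - d₁ * x.2 := by
    field_simp; ring
  have hx : ((d₂ - d₁ * p) * (q * x.1 - x.2) / (q - p)) • rayPoint d₁ d₂ p
      + ((d₂ - d₁ * q) * (x.2 - p * x.1) / (q - p)) • rayPoint d₁ d₂ q = x := by
    ext <;> simp only [rayPoint, Prod.fst_add, Prod.snd_add, Prod.smul_fst, Prod.smul_snd,
      smul_eq_mul] <;> field_simp <;> ring
  rwa [hsum, hx] at hseg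

theorem lam_mul_rpow_le_rpow_mul_rpow (ha₁ : 0 < a₁) (ha₂ : 0 ≤ a₂) (hp : 0 ≤ p) (hd₁ : d₁ ≤ 0)
    (hd₂ : 0 ≤ d₂) (hlam : 0 ≤ lam) (hlamp : lam * (d₂ - d₁ * p) ^ (a₁ + a₂) = p ^ a₂)
    (hlamq : lam * (d₂ - d₁ * q) ^ (a₁ + a₂) = q ^ a₂) {x : ℝ × ℝ} (hx : x ∈ sector p q) :
    lam * (d₂ * x.1 - d₁ * x.2) ^ (a₁ + a₂) ≤ x.1 ^ a₁ * x.2 ^ a₂ := by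
  obtain ⟨⟨hx₁, hx₂⟩, hpx, hxq⟩ := hx
  have hβ : 0 < a₁ + a₂ := by linarith
  have hD : ∀ r, 0 ≤ r → 0 ≤ d₂ - d₁ * r := fun r hr => by nlinarith
  rcases hx₁.eq_or_lt with h0 | hx₁
  · have hx₂0 : x.2 = 0 := by rw [← h0] at hxq; linarith
    rw [← h0, hx₂0]
    simp [zero_rpow hβ.ne', zero_rpow ha₁.ne']
  set κ := lam ^ (a₁ + a₂)⁻¹
  set t := x.2 / x.1
  have hpt : p ≤ t := (le_div_iff₀ hx₁).2 hpx
  have htq : t ≤ q := (div_le_iff₀ hx₁).2 hxq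
  have hq : 0 ≤ q := hp.trans (hpt.trans htq)
  have hκp := rpow_inv_mul_eq_of_mul_rpow_eq hlam (hD p hp) hp hβ.ne' hlamp
  have hκq := rpow_inv_mul_eq_of_mul_rpow_eq hlam (hD q hq) hq hβ.ne' hlamq
  -- `t ↦ κ (d₂ - d₁ t)` is the chord of the concave `t ↦ t ^ (a₂ / β)` over `[p, q]`
  have hchord : κ * (d₂ - d₁ * t) ≤ t ^ (a₂ / (a₁ + a₂)) := by
    have hconc := concaveOn_rpow (p := a₂ / (a₁ + a₂)) (by positivity)
      (div_le_one_of_le₀ (by linarith) hβ.le)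
    have := hconc.affine_le_of_mem_Icc (m := -(κ * d₁)) (c := κ * d₂) (mem_Ici.2 hp)
      (mem_Ici.2 hq) (by linarith) (by linarith) ⟨hpt, htq⟩
    linarith
  have hxt : x.2 = t * x.1 := (div_mul_cancel₀ _ hx₁.ne').symm
  have hκ0 : 0 ≤ κ := rpow_nonneg hlam _
  have hDt := hD t (hp.trans hpt)
  calc lam * (d₂ * x.1 - d₁ * x.2) ^ (a₁ + a₂) = (κ * (d₂ - d₁ * t) * x.1) ^ (a₁ + a₂) := by
        rw [mul_rpow (mul_nonneg hκ0 hDt) hx₁.le, mul_rpow hκ0 hDt, rpow_inv_rpow hlam hβ.ne',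
          mul_assoc, ← mul_rpow hDt hx₁.le, hxt]
        ring_nf
    _ ≤ (t ^ (a₂ / (a₁ + a₂)) * x.1) ^ (a₁ + a₂) := by
        gcongr
    _ = x.1 ^ a₁ * x.2 ^ a₂ := by
        rw [mul_rpow (by positivity) hx₁.le, ← rpow_mul (hp.trans hpt), div_mul_cancel₀ _ hβ.ne',
          rpow_add hx₁, hxt, mul_rpow (hp.trans hpt) hx₁.le]
        ring

end Sector

-- `epi(f, X ∩ W₁₂)`
def cobbDouglasEpigraph (a₁ a₂ ℓ u p q : ℝ) : Set ((ℝ × ℝ) × ℝ) :=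
  {xz | ((0 ≤ xz.1.1 ∧ 0 ≤ xz.1.2) ∧
      (ℓ ≤ xz.1.1 ^ a₁ * xz.1.2 ^ a₂ ∧ xz.1.1 ^ a₁ * xz.1.2 ^ a₂ ≤ u) ∧
      (p * xz.1.1 ≤ xz.1.2 ∧ xz.1.2 ≤ q * xz.1.1)) ∧
    xz.1.1 ^ a₁ * xz.1.2 ^ a₂ ≤ xz.2}

-- The set `H`, with `σu` standing for `(u / λ) ^ (1 / β)`.
def lowerEnvelopeSet (a₁ a₂ ℓ p q d₁ d₂ σu ζ z₀ : ℝ) : Set ((ℝ × ℝ) × ℝ) :=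
  {xz | ((0 ≤ xz.1.1 ∧ 0 ≤ xz.1.2) ∧
      (p * xz.1.1 ≤ xz.1.2 ∧ xz.1.2 ≤ q * xz.1.1) ∧
      ℓ ≤ xz.1.1 ^ a₁ * xz.1.2 ^ a₂ ∧
      d₂ * xz.1.1 - d₁ * xz.1.2 ≤ σu) ∧
    ζ * (d₂ * xz.1.1 - d₁ * xz.1.2) + z₀ ≤ xz.2 ∧
    ℓ ≤ xz.2}

section Envelope

variable {a₁ a₂ ℓ u p q d₁ d₂ lam σl σu ζ z₀ : ℝ}

theorem convex_lowerEnvelopeSet (ha₁ : 0 ≤ a₁) (ha₂ : 0 ≤ a₂) (hℓ : 0 ≤ ℓ) :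
    Convex ℝ (lowerEnvelopeSet a₁ a₂ ℓ p q d₁ d₂ σu ζ z₀) := by
  rintro ⟨x, z⟩ ⟨⟨hx, ⟨hpx, hxq⟩, hfx, hsx⟩, hzx, hℓz⟩ ⟨y, w⟩ ⟨⟨hy, ⟨hpy, hyq⟩, hfy, hsy⟩, hzy, hℓw⟩
    a b ha hb hab
  have hf := (convex_setOf_le_rpow_mul_rpow ha₁ ha₂ hℓ ⟨hx.1, hx.2, hfx⟩ ⟨hy.1, hy.2, hfy⟩
    ha hb hab).2.2
  obtain rfl : b = 1 - a := by linarith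
  simp only [lowerEnvelopeSet, mem_ofPred_eq, Prod.smul_mk, Prod.mk_add_mk, Prod.fst_add,
    Prod.snd_add, Prod.smul_fst, Prod.smul_snd, smul_eq_mul] at hf hx hy ⊢
  refine ⟨⟨⟨by nlinarith, by nlinarith⟩, ⟨by nlinarith, by nlinarith⟩, hf, by nlinarith⟩,
    by nlinarith, by nlinarith⟩

theorem cobbDouglasEpigraph_subset_lowerEnvelopeSet (ha₁ : 0 < a₁) (ha₂ : 0 ≤ a₂)
    (hβ1 : a₁ + a₂ ≤ 1) (hp : 0 ≤ p) (hd₁ : d₁ ≤ 0) (hd₂ : 0 ≤ d₂) (hlam : 0 < lam)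
    (hlamp : lam * (d₂ - d₁ * p) ^ (a₁ + a₂) = p ^ a₂)
    (hlamq : lam * (d₂ - d₁ * q) ^ (a₁ + a₂) = q ^ a₂) (hζ : 0 ≤ ζ) (hσl : 0 ≤ σl)
    (hσu : 0 ≤ σu) (hℓ : lam * σl ^ (a₁ + a₂) = ℓ) (hu : lam * σu ^ (a₁ + a₂) = u)
    (hζl : ζ * σl + z₀ = ℓ) (hζu : ζ * σu + z₀ = u) :
    cobbDouglasEpigraph a₁ a₂ ℓ u p q ⊆ lowerEnvelopeSet a₁ a₂ ℓ p q d₁ d₂ σu ζ z₀ := by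
  rintro ⟨x, z⟩ ⟨⟨hx, ⟨hℓf, hfu⟩, hcone⟩, hfz⟩
  have hβ : 0 < a₁ + a₂ := by linarith
  have hlow := lam_mul_rpow_le_rpow_mul_rpow ha₁ ha₂ hp hd₁ hd₂ hlam.le hlamp hlamq ⟨hx, hcone⟩
  have hs : 0 ≤ d₂ * x.1 - d₁ * x.2 := by nlinarith [hx.1, hx.2]
  have hsu : d₂ * x.1 - d₁ * x.2 ≤ σu := by
    rw [← rpow_le_rpow_iff hs hσu hβ, ← mul_le_mul_iff_right₀ hlam]
    linarith
  refine ⟨⟨hx, hcone, hℓf, hsu⟩, ?_, hℓf.trans hfz⟩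
  calc ζ * (d₂ * x.1 - d₁ * x.2) + z₀ ≤ max ℓ (lam * (d₂ * x.1 - d₁ * x.2) ^ (a₁ + a₂)) :=
        affine_le_max_of_chord hβ.le hβ1 hlam.le hζ hσl hℓ hζl (by rw [hu, hζu]) hsu
    _ ≤ z := max_le (hℓf.trans hfz) (hlow.trans hfz)

theorem smul_rayPoint_mem_cobbDouglasEpigraph {r σ w : ℝ} (hβ : a₁ + a₂ ≠ 0) (hp : 0 ≤ p)
    (hpr : p ≤ r) (hrq : r ≤ q) (hD : 0 < d₂ - d₁ * r)
    (hlamr : lam * (d₂ - d₁ * r) ^ (a₁ + a₂) = r ^ a₂) (hσ : 0 ≤ σ)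
    (hℓσ : ℓ ≤ lam * σ ^ (a₁ + a₂)) (hσu : lam * σ ^ (a₁ + a₂) ≤ u)
    (hσw : lam * σ ^ (a₁ + a₂) ≤ w) :
    (σ • rayPoint d₁ d₂ r, w) ∈ cobbDouglasEpigraph a₁ a₂ ℓ u p q := by
  obtain ⟨hnonneg, hcone⟩ := smul_rayPoint_mem_sector hp hpr hrq hD hσ
  have hf := smul_rayPoint_rpow (a₁ := a₁) (a₂ := a₂) (hp.trans hpr) hD hσ hβ hlamr
  exact ⟨⟨hnonneg, ⟨hf ▸ hℓσ, hf ▸ hσu⟩, hcone⟩, hf ▸ hσw⟩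

theorem smul_rayPoint_mem_convexHull {r σ z : ℝ} (hβ : a₁ + a₂ ≠ 0) (hp : 0 ≤ p)
    (hpr : p ≤ r) (hrq : r ≤ q) (hD : 0 < d₂ - d₁ * r)
    (hlamr : lam * (d₂ - d₁ * r) ^ (a₁ + a₂) = r ^ a₂) (hℓu : ℓ ≤ u) (hσl : 0 ≤ σl)
    (hℓ : lam * σl ^ (a₁ + a₂) = ℓ) (hu : lam * σu ^ (a₁ + a₂) = u)
    (hζl : ζ * σl + z₀ = ℓ) (hζu : ζ * σu + z₀ = u) (hσ : σ ∈ Icc σl σu) (hz : ζ * σ + z₀ ≤ z) :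
    (σ • rayPoint d₁ d₂ r, z) ∈ convexHull ℝ (cobbDouglasEpigraph a₁ a₂ ℓ u p q) := by
  set δ := z - (ζ * σ + z₀)
  have hδ : 0 ≤ δ := sub_nonneg.2 hz
  have hA := smul_rayPoint_mem_cobbDouglasEpigraph (w := ℓ + δ) hβ hp hpr hrq hD hlamr hσl
    hℓ.ge (hℓ ▸ hℓu) (by linarith)
  have hB := smul_rayPoint_mem_cobbDouglasEpigraph (w := u + δ) hβ hp hpr hrq hD hlamr
    (hσl.trans (hσ.1.trans hσ.2)) (hu ▸ hℓu) hu.le (by linarith)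
  apply segment_subset_convexHull hA hB
  rw [← segment_eq_Icc (hσ.1.trans hσ.2)] at hσ
  obtain ⟨θ, τ, hθ, hτ, hθτ, rfl⟩ := hσ
  refine ⟨θ, τ, hθ, hτ, hθτ, Prod.ext ?_ ?_⟩
  · simp only [Prod.fst_add, Prod.smul_fst, smul_smul, ← add_smul, smul_eq_mul]
  · simp only [Prod.snd_add, Prod.smul_snd, smul_eq_mul, δ]
    linear_combination (-θ) * hζl - τ * hζu + (z - ζ * (θ * σl + τ * σu)) * hθτ

theorem mk_mem_convexHull_of_level_le (ha₁ : 0 < a₁) (ha₂ : 0 < a₂) (hp : 0 < p)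
    (hpq : p < q) (hd₁ : d₁ < 0) (hd₂ : 0 < d₂) (hlam : 0 ≤ lam)
    (hlamp : lam * (d₂ - d₁ * p) ^ (a₁ + a₂) = p ^ a₂)
    (hlamq : lam * (d₂ - d₁ * q) ^ (a₁ + a₂) = q ^ a₂) (hℓu : ℓ ≤ u)
    (hℓ : lam * σl ^ (a₁ + a₂) = ℓ) {x : ℝ × ℝ} {z : ℝ} (hx : x ∈ sector p q)
    (hℓf : ℓ ≤ x.1 ^ a₁ * x.2 ^ a₂) (hsl : d₂ * x.1 - d₁ * x.2 ≤ σl) (hℓz : ℓ ≤ z) :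
    (x, z) ∈ convexHull ℝ (cobbDouglasEpigraph a₁ a₂ ℓ u p q) := by
  have hDp : 0 < d₂ - d₁ * p := by nlinarith
  have hDq : 0 < d₂ - d₁ * q := by nlinarith
  set s := d₂ * x.1 - d₁ * x.2
  have hs : 0 ≤ s := by nlinarith [hx.1.1, hx.1.2]
  have hf : Continuous fun y : ℝ × ℝ => y.1 ^ a₁ * y.2 ^ a₂ :=
    ((continuous_rpow_const ha₁.le).comp continuous_fst).mul
      ((continuous_rpow_const ha₂.le).comp continuous_snd)
  have hend : ∀ r, 0 ≤ r → 0 < d₂ - d₁ * r → lam * (d₂ - d₁ * r) ^ (a₁ + a₂) = r ^ a₂ →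
      (s • rayPoint d₁ d₂ r).1 ^ a₁ * (s • rayPoint d₁ d₂ r).2 ^ a₂ ≤ ℓ := fun r hr hD hlamr => by
    rw [smul_rayPoint_rpow hr hD hs (by positivity) hlamr, ← hℓ]
    gcongr
  obtain ⟨y₁, hy₁, y₂, hy₂, hfy₁, hfy₂, hxy⟩ := hf.continuousOn.exists_apply_eq_on_segment_around
    (mem_segment_smul_rayPoint hpq hDp hDq hx.2.1 hx.2.2) (hend p hp.le hDp hlamp)
    (hend q (hp.trans hpq).le hDq hlamq) hℓf
  have hmem : ∀ y ∈ segment ℝ (s • rayPoint d₁ d₂ p) (s • rayPoint d₁ d₂ q),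
      y.1 ^ a₁ * y.2 ^ a₂ = ℓ → (y, z) ∈ convexHull ℝ (cobbDouglasEpigraph a₁ a₂ ℓ u p q) :=
    fun y hy hfy => by
      obtain ⟨hy0, hycone⟩ := convex_sector.segment_subset
        (smul_rayPoint_mem_sector hp.le le_rfl hpq.le hDp hs)
        (smul_rayPoint_mem_sector hp.le hpq.le le_rfl hDq hs) hy
      exact subset_convexHull ℝ _ ⟨⟨hy0, ⟨hfy.ge, hfy.trans_le hℓu⟩, hycone⟩, hfy.trans_le hℓz⟩
  exact mk_mem_convexHull_of_mem_segment hxy (hmem y₁ hy₁ hfy₁) (hmem y₂ hy₂ hfy₂)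

theorem lowerEnvelopeSet_subset_convexHull (ha₁ : 0 < a₁) (ha₂ : 0 < a₂) (hp : 0 < p)
    (hpq : p < q) (hd₁ : d₁ < 0) (hd₂ : 0 < d₂) (hlam : 0 ≤ lam)
    (hlamp : lam * (d₂ - d₁ * p) ^ (a₁ + a₂) = p ^ a₂)
    (hlamq : lam * (d₂ - d₁ * q) ^ (a₁ + a₂) = q ^ a₂) (hℓu : ℓ ≤ u) (hσl : 0 ≤ σl)
    (hℓ : lam * σl ^ (a₁ + a₂) = ℓ) (hu : lam * σu ^ (a₁ + a₂) = u)
    (hζl : ζ * σl + z₀ = ℓ) (hζu : ζ * σu + z₀ = u) :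
    lowerEnvelopeSet a₁ a₂ ℓ p q d₁ d₂ σu ζ z₀ ⊆
      convexHull ℝ (cobbDouglasEpigraph a₁ a₂ ℓ u p q) := by
  rintro ⟨x, z⟩ ⟨⟨hx, hcone, hℓf, hsu⟩, hζz, hℓz⟩
  rcases le_total (d₂ * x.1 - d₁ * x.2) σl with hsl | hsl
  · exact mk_mem_convexHull_of_level_le ha₁ ha₂ hp hpq hd₁ hd₂ hlam hlamp hlamq hℓu hℓ
      ⟨hx, hcone⟩ hℓf hsl hℓz
  have hβ : a₁ + a₂ ≠ 0 := by positivity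
  have hDp : 0 < d₂ - d₁ * p := by nlinarith
  have hDq : 0 < d₂ - d₁ * q := by nlinarith
  exact mk_mem_convexHull_of_mem_segment (mem_segment_smul_rayPoint hpq hDp hDq hcone.1 hcone.2)
    (smul_rayPoint_mem_convexHull hβ hp.le le_rfl hpq.le hDp hlamp hℓu hσl hℓ hu hζl hζu
      ⟨hsl, hsu⟩ hζz)
    (smul_rayPoint_mem_convexHull hβ hp.le hpq.le le_rfl hDq hlamq hℓu hσl hℓ hu hζl hζu
      ⟨hsl, hsu⟩ hζz)

theorem convexHull_cobbDouglasEpigraph (ha₁ : 0 < a₁) (ha₂ : 0 < a₂) (hβ1 : a₁ + a₂ ≤ 1)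
    (hℓ : 0 ≤ ℓ) (hℓu : ℓ ≤ u) (hp : 0 < p) (hpq : p < q) (hd₁ : d₁ < 0) (hd₂ : 0 < d₂)
    (hlam : 0 < lam) (hlamp : lam * (d₂ - d₁ * p) ^ (a₁ + a₂) = p ^ a₂)
    (hlamq : lam * (d₂ - d₁ * q) ^ (a₁ + a₂) = q ^ a₂) (hζ : 0 ≤ ζ) (hσl : 0 ≤ σl)
    (hσu : 0 ≤ σu) (hℓσ : lam * σl ^ (a₁ + a₂) = ℓ) (huσ : lam * σu ^ (a₁ + a₂) = u)
    (hζl : ζ * σl + z₀ = ℓ) (hζu : ζ * σu + z₀ = u) :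
    convexHull ℝ (cobbDouglasEpigraph a₁ a₂ ℓ u p q) = lowerEnvelopeSet a₁ a₂ ℓ p q d₁ d₂ σu ζ z₀ :=
  Subset.antisymm
    (convexHull_min
      (cobbDouglasEpigraph_subset_lowerEnvelopeSet ha₁ ha₂.le hβ1 hp.le hd₁.le hd₂.le hlam hlamp
        hlamq hζ hσl hσu hℓσ huσ hζl hζu)
      (convex_lowerEnvelopeSet ha₁.le ha₂.le hℓ))
    (lowerEnvelopeSet_subset_convexHull ha₁ ha₂ hp hpq hd₁ hd₂ hlam.le hlamp hlamq hℓu hσl hℓσ huσ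
      hζl hζu)

end Envelope

/-- For `n = 2` and `β = a₁ + a₂ ≤ 1`, the lower envelope of `f` over
`X ∩ W₁₂` equals `H = {(x,z) : x ∈ Y, z ≥ ζ (d₂ x₁ − d₁ x₂) + z₀, z ≥ ℓ}`. -/
theorem lower_envelope_n2_of_beta_le_one (a₁ a₂ ℓ u p q β d₁ d₂ lam z₀ ζ : ℝ)
    (ha₁ : 0 < a₁) (ha₂ : 0 < a₂) (hβ : β = a₁ + a₂) (hβ1 : β ≤ 1)
    (hℓ : 0 < ℓ) (hℓu : ℓ < u) (hp : 0 < p) (hpq : p < q)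
    (hd₁ : d₁ = q ^ (-(a₂ / β)) - p ^ (-(a₂ / β)))
    (hd₂ : d₂ = q ^ (a₁ / β) - p ^ (a₁ / β))
    (hlam : lam = p ^ a₂ / (d₂ - d₁ * p) ^ β)
    (hz₀ : z₀ = (u ^ (1 / β) * ℓ - ℓ ^ (1 / β) * u) / (u ^ (1 / β) - ℓ ^ (1 / β)))
    (hζ : ζ = lam ^ (1 / β) * (u - ℓ) / (u ^ (1 / β) - ℓ ^ (1 / β))) :
    convexHull ℝ
      {xz : (ℝ × ℝ) × ℝ |
        ((0 ≤ xz.1.1 ∧ 0 ≤ xz.1.2) ∧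
          (ℓ ≤ xz.1.1 ^ a₁ * xz.1.2 ^ a₂ ∧ xz.1.1 ^ a₁ * xz.1.2 ^ a₂ ≤ u) ∧
          (p * xz.1.1 ≤ xz.1.2 ∧ xz.1.2 ≤ q * xz.1.1)) ∧
        xz.1.1 ^ a₁ * xz.1.2 ^ a₂ ≤ xz.2} =
    {xz : (ℝ × ℝ) × ℝ |
        ((0 ≤ xz.1.1 ∧ 0 ≤ xz.1.2) ∧
          (p * xz.1.1 ≤ xz.1.2 ∧ xz.1.2 ≤ q * xz.1.1) ∧
          ℓ ≤ xz.1.1 ^ a₁ * xz.1.2 ^ a₂ ∧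
          d₂ * xz.1.1 - d₁ * xz.1.2 ≤ (u / lam) ^ (1 / β)) ∧
        ζ * (d₂ * xz.1.1 - d₁ * xz.1.2) + z₀ ≤ xz.2 ∧
        ℓ ≤ xz.2} := by
  subst hβ hζ hz₀
  obtain ⟨hd₁0, hd₂0, hlam0, hlamp, hlamq⟩ := sector_coefficients ha₁ ha₂ hp hpq hd₁ hd₂ hlam
  have hβ : a₁ + a₂ ≠ 0 := by positivity
  have hu : 0 < u := hℓ.trans hℓu
  have hroot : ℓ ^ (1 / (a₁ + a₂)) < u ^ (1 / (a₁ + a₂)) := rpow_lt_rpow hℓ.le hℓu (by positivity)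
  exact convexHull_cobbDouglasEpigraph ha₁ ha₂ hβ1 hℓ.le hℓu.le hp hpq hd₁0 hd₂0 hlam0 hlamp hlamq
    (div_nonneg (mul_nonneg (by positivity) (sub_nonneg.2 hℓu.le)) (sub_nonneg.2 hroot.le))
    (by positivity) (by positivity) (lam_mul_div_rpow_one_div hlam0 hℓ.le hβ)
    (lam_mul_div_rpow_one_div hlam0 hu.le hβ)
    (chord_rpow_one_div_eq hlam0 hℓ.le hroot.ne (.inl rfl))
    (chord_rpow_one_div_eq hlam0 hu.le hroot.ne (.inr rfl))
end
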